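/- Let 𝒜₀ be a semilattice of subsets of a set X, Y a real vector space, and 𝒜₁ the lattice generated by 𝒜₀. Then Φ₀ : 𝒜₀ → Y is semi-modular if and only if there exists a modular set function Φ₁ : 𝒜₁ → Y with Φ₁ restricted to 𝒜₀ equal to Φ₀; moreover such Φ₁ is unique. -/
import Mathlib


open Finset Set

/-- `ν(b) = (−1)^{1+|b|}` for a finite set `b` of natural numbers. -/
noncomputable def nu (b : Finset ℕ) : ℝ := (-1 : ℝ) ^ (1 + b.card)

/-- A `∩`-semilattice of sets: a nonempty family closed under finite intersections. -/
def IsCapSemilattice {X : Type*} (𝒜 : Set (Set X)) : Prop :=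
  𝒜.Nonempty ∧ ∀ A ∈ 𝒜, ∀ B ∈ 𝒜, A ∩ B ∈ 𝒜

/-- A `∪`-semilattice of sets: a nonempty family closed under finite unions. -/
def IsCupSemilattice {X : Type*} (𝒜 : Set (Set X)) : Prop :=
  𝒜.Nonempty ∧ ∀ A ∈ 𝒜, ∀ B ∈ 𝒜, A ∪ B ∈ 𝒜

/-- A lattice of sets: nonempty, closed under finite intersections and finite unions. -/
def IsSetLattice {X : Type*} (𝒜 : Set (Set X)) : Prop :=
  𝒜.Nonempty ∧ (∀ A ∈ 𝒜, ∀ B ∈ 𝒜, A ∩ B ∈ 𝒜) ∧ ∀ A ∈ 𝒜, ∀ B ∈ 𝒜, A ∪ B ∈ 𝒜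

/-- A ring of sets: nonempty, closed under finite unions and set differences. -/
def IsSetRing0 {X : Type*} (𝒜 : Set (Set X)) : Prop :=
  𝒜.Nonempty ∧ (∀ A ∈ 𝒜, ∀ B ∈ 𝒜, A ∪ B ∈ 𝒜) ∧ ∀ A ∈ 𝒜, ∀ B ∈ 𝒜, A \ B ∈ 𝒜

/-- An algebra of sets: a ring of sets containing the whole space. -/
def IsSetAlgebra0 {X : Type*} (𝒜 : Set (Set X)) : Prop :=
  IsSetRing0 𝒜 ∧ Set.univ ∈ 𝒜

/-- A set function is modular on `𝒜` if `Φ(A∪B) + Φ(A∩B) = Φ(A) + Φ(B)` for `A, B ∈ 𝒜`. -/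
def Modular {X Y : Type*} [AddCommGroup Y] (𝒜 : Set (Set X)) (Φ : Set X → Y) : Prop :=
  ∀ A ∈ 𝒜, ∀ B ∈ 𝒜, Φ (A ∪ B) + Φ (A ∩ B) = Φ A + Φ B

/-- Strongly additive: modular, and vanishing at `∅` whenever `∅` belongs to the family. -/
def StronglyAdditive {X Y : Type*} [AddCommGroup Y] (𝒜 : Set (Set X)) (Φ : Set X → Y) : Prop :=
  Modular 𝒜 Φ ∧ (∅ ∈ 𝒜 → Φ ∅ = 0)

/-- Semi-modularity on a `∩`-semilattice: whenever `A₁,…,A_N ∈ 𝒜` and `⋃ A_n ∈ 𝒜`,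
`Φ(⋃_{n} A_n) = Σ_{∅≠b⊆{1,…,N}} ν(b) Φ(⋂_{n∈b} A_n)`. -/
def CapSemiModular {X Y : Type*} [AddCommGroup Y] [Module ℝ Y]
    (𝒜 : Set (Set X)) (Φ : Set X → Y) : Prop :=
  ∀ N : ℕ, 0 < N → ∀ A : ℕ → Set X,
    (∀ n ∈ Finset.range N, A n ∈ 𝒜) → (⋃ n ∈ Finset.range N, A n) ∈ 𝒜 →
    Φ (⋃ n ∈ Finset.range N, A n) =
      ∑ b ∈ (Finset.range N).powerset.filter (· ≠ ∅), nu b • Φ (⋂ n ∈ b, A n)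

/-- Semi-modularity on a `∪`-semilattice: whenever `A₁,…,A_N ∈ 𝒜` and `⋂ A_n ∈ 𝒜`,
`Φ(⋂_{n} A_n) = Σ_{∅≠b⊆{1,…,N}} ν(b) Φ(⋃_{n∈b} A_n)`. -/
def CupSemiModular {X Y : Type*} [AddCommGroup Y] [Module ℝ Y]
    (𝒜 : Set (Set X)) (Φ : Set X → Y) : Prop :=
  ∀ N : ℕ, 0 < N → ∀ A : ℕ → Set X,
    (∀ n ∈ Finset.range N, A n ∈ 𝒜) → (⋂ n ∈ Finset.range N, A n) ∈ 𝒜 →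
    Φ (⋂ n ∈ Finset.range N, A n) =
      ∑ b ∈ (Finset.range N).powerset.filter (· ≠ ∅), nu b • Φ (⋃ n ∈ b, A n)

/-- A set function on a semilattice is semi-modular if it satisfies the appropriate
semi-modularity condition for the kind(s) of semilattice its domain is. -/
def SemiModular {X Y : Type*} [AddCommGroup Y] [Module ℝ Y]
    (𝒜 : Set (Set X)) (Φ : Set X → Y) : Prop :=
  (IsCapSemilattice 𝒜 → CapSemiModular 𝒜 Φ) ∧ (IsCupSemilattice 𝒜 → CupSemiModular 𝒜 Φ)

/-- Semi-additive: admits a semi-modular extension to `𝒜 ∪ {∅}` vanishing at `∅`. -/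
def SemiAdditive {X Y : Type*} [AddCommGroup Y] [Module ℝ Y]
    (𝒜 : Set (Set X)) (Φ : Set X → Y) : Prop :=
  ∃ Ψ : Set X → Y, (∀ A ∈ 𝒜, Ψ A = Φ A) ∧ Ψ ∅ = 0 ∧ SemiModular (insert ∅ 𝒜) Ψ



lemma nu_eq (b : Finset ℕ) : nu b = -(-1 : ℝ) ^ b.card := by
  simp [nu, pow_add]

lemma nu_insert {a : ℕ} {b : Finset ℕ} (h : a ∉ b) : nu (insert a b) = -nu b := by
  rw [nu_eq, nu_eq, Finset.card_insert_of_notMem h, pow_succ]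
  ring

lemma sum_powerset_neg_one {α : Type*} [DecidableEq α] (s : Finset α) :
    ∑ b ∈ s.powerset, (-1 : ℝ) ^ b.card = if s = ∅ then 1 else 0 := by
  have := Finset.sum_powerset_neg_one_pow_card (x := s)
  have h2 : ((∑ m ∈ s.powerset, (-1 : ℤ) ^ m.card : ℤ) : ℝ)
      = ∑ b ∈ s.powerset, (-1 : ℝ) ^ b.card := by push_cast; rfl
  rw [← h2, this]
  split <;> norm_num

noncomputable def Tsum (b c : Finset ℕ) : ℝ :=
  ∑ q ∈ (b ×ˢ c).powerset.filter
      (fun q => q.image Prod.fst = b ∧ q.image Prod.snd = c),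
    (-1 : ℝ) ^ q.card

noncomputable def hval (b c : Finset ℕ) : ℝ :=
  if b = ∅ then (if c = ∅ then 1 else 0)
  else if c = ∅ then 0 else -(-1 : ℝ) ^ (b.card + c.card)

lemma fiber_eq (b c b' c' : Finset ℕ) (hb' : b' ⊆ b) (hc' : c' ⊆ c) :
    (b ×ˢ c).powerset.filter
        (fun q => (q.image Prod.fst, q.image Prod.snd) = (b', c'))
      = (b' ×ˢ c').powerset.filter
        (fun q => q.image Prod.fst = b' ∧ q.image Prod.snd = c') := by
  ext q
  simp only [Finset.mem_filter, Finset.mem_powerset, Prod.mk.injEq]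
  constructor
  · rintro ⟨hq, h1, h2⟩
    refine ⟨fun x hx => ?_, h1, h2⟩
    rcases x with ⟨u, v⟩
    have hu : u ∈ b' := by rw [← h1]; exact mem_image.2 ⟨(u, v), hx, rfl⟩
    have hv : v ∈ c' := by rw [← h2]; exact mem_image.2 ⟨(u, v), hx, rfl⟩
    exact mem_product.2 ⟨hu, hv⟩
  · rintro ⟨hq, h1, h2⟩
    exact ⟨hq.trans (Finset.product_subset_product hb' hc'), h1, h2⟩

lemma partition (b c : Finset ℕ) :
    ∑ p ∈ b.powerset ×ˢ c.powerset, Tsum p.1 p.2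
      = if b = ∅ ∨ c = ∅ then 1 else 0 := by
  have hmap : ∀ q ∈ (b ×ˢ c).powerset,
      (q.image Prod.fst, q.image Prod.snd) ∈ b.powerset ×ˢ c.powerset := by
    intro q hq
    rw [Finset.mem_powerset] at hq
    refine Finset.mem_product.2 ⟨Finset.mem_powerset.2 ?_, Finset.mem_powerset.2 ?_⟩
    · intro u hu
      rcases mem_image.1 hu with ⟨x, hx, rfl⟩
      exact (mem_product.1 (hq hx)).1
    · intro u hu
      rcases mem_image.1 hu with ⟨x, hx, rfl⟩
      exact (mem_product.1 (hq hx)).2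
  have hfib := Finset.sum_fiberwise_of_maps_to hmap (fun q => (-1 : ℝ) ^ q.card)
  have : ∑ p ∈ b.powerset ×ˢ c.powerset, Tsum p.1 p.2
      = ∑ q ∈ (b ×ˢ c).powerset, (-1 : ℝ) ^ q.card := by
    rw [← hfib]
    refine Finset.sum_congr rfl fun p hp => ?_
    rcases mem_product.1 hp with ⟨hp1, hp2⟩
    rw [Tsum, ← fiber_eq b c p.1 p.2 (Finset.mem_powerset.1 hp1) (Finset.mem_powerset.1 hp2)]
  rw [this, sum_powerset_neg_one]
  simp [Finset.product_eq_empty]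

lemma aux1 (s : Finset ℕ) :
    ∑ c' ∈ s.powerset, (if c' = ∅ then (1:ℝ) else 0) = 1 := by
  rw [Finset.sum_ite_eq' s.powerset ∅ (fun _ => (1:ℝ))]
  simp

lemma aux2 (s : Finset ℕ) :
    ∑ c' ∈ s.powerset, (if c' = ∅ then (0:ℝ) else (-1:ℝ)^c'.card)
      = (if s = ∅ then 1 else 0) - 1 := by
  have : ∀ c' ∈ s.powerset, (if c' = ∅ then (0:ℝ) else (-1:ℝ)^c'.card)
      = (-1:ℝ)^c'.card - (if c' = ∅ then (1:ℝ) else 0) := by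
    intro c' _
    by_cases h : c' = ∅ <;> simp [h]
  rw [Finset.sum_congr rfl this, Finset.sum_sub_distrib, sum_powerset_neg_one, aux1]

lemma hval_partition (b c : Finset ℕ) :
    ∑ p ∈ b.powerset ×ˢ c.powerset, hval p.1 p.2
      = if b = ∅ ∨ c = ∅ then 1 else 0 := by
  rw [Finset.sum_product]
  have inner : ∀ b' : Finset ℕ, ∑ c' ∈ c.powerset, hval b' c'
      = if b' = ∅ then 1 else
          (-(-1:ℝ)^b'.card) * ((if c = ∅ then 1 else 0) - 1) := by
    intro b'
    by_cases hb' : b' = ∅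
    · subst hb'
      simp only [hval, ite_true, if_pos rfl]
      rw [aux1]
    · simp only [hval, if_neg hb', if_neg hb']
      rw [← aux2 c, Finset.mul_sum]
      refine Finset.sum_congr rfl fun c' _ => ?_
      by_cases hc' : c' = ∅ <;> simp [hc', pow_add] <;> ring
  rw [Finset.sum_congr rfl (fun b' _ => inner b')]
  have : ∀ b' ∈ b.powerset, (if b' = ∅ then (1:ℝ) else
      (-(-1:ℝ)^b'.card) * ((if c = ∅ then 1 else 0) - 1))
      = (if b' = ∅ then (1:ℝ) else 0)
        - (if b' = ∅ then (0:ℝ) else (-1:ℝ)^b'.card) * ((if c = ∅ then 1 else 0) - 1) := by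
    intro b' _
    by_cases hb' : b' = ∅ <;> simp [hb'] <;> ring
  rw [Finset.sum_congr rfl this, Finset.sum_sub_distrib, aux1, ← Finset.sum_mul, aux2]
  by_cases hb : b = ∅ <;> by_cases hc : c = ∅ <;> simp [hb, hc]

lemma Tsum_eq : ∀ (b c : Finset ℕ), Tsum b c = hval b c := by
  have main : ∀ (n : ℕ) (b c : Finset ℕ), b.card + c.card = n → Tsum b c = hval b c := by
    intro n
    induction n using Nat.strong_induction_on with
    | _ n IH =>
      intro b c hn
      have hmem : (b, c) ∈ b.powerset ×ˢ c.powerset :=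
        Finset.mem_product.2 ⟨Finset.mem_powerset_self b, Finset.mem_powerset_self c⟩
      have hsmall : ∀ p ∈ (b.powerset ×ˢ c.powerset).erase (b, c),
          Tsum p.1 p.2 = hval p.1 p.2 := by
        rintro ⟨b', c'⟩ hp
        have hne := Finset.ne_of_mem_erase hp
        have hp' := Finset.mem_of_mem_erase hp
        rcases Finset.mem_product.1 hp' with ⟨h1, h2⟩
        rw [Finset.mem_powerset] at h1 h2
        have hlt : b'.card + c'.card < n := by
          rcases eq_or_ne b' b with hb | hb
          · have hc : c' ≠ c := fun h => hne (by rw [hb, h])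
            have hlt1 : c'.card < c.card := Finset.card_lt_card (lt_of_le_of_ne h2 hc)
            have hb2 : b'.card = b.card := by rw [hb]
            omega
          · have hlt1 : b'.card < b.card := Finset.card_lt_card (lt_of_le_of_ne h1 hb)
            have h2' : c'.card ≤ c.card := Finset.card_le_card h2
            omega
        exact IH _ (hn ▸ hlt) b' c' rfl
      have e1 := partition b c
      have e2 := hval_partition b c
      rw [← Finset.add_sum_erase _ _ hmem] at e1 e2
      rw [Finset.sum_congr rfl hsmall] at e1
      have := e1.trans e2.symm
      exact add_right_cancel this
  intro b c; exact main _ b c rfl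

section CapSide

variable {X Y : Type*} [AddCommGroup Y] [Module ℝ Y]

lemma finset_biInter_mem {𝒜 : Set (Set X)} (hcl : ∀ A ∈ 𝒜, ∀ B ∈ 𝒜, A ∩ B ∈ 𝒜)
    (A : ℕ → Set X) :
    ∀ b : Finset ℕ, b.Nonempty → (∀ n ∈ b, A n ∈ 𝒜) → (⋂ n ∈ b, A n) ∈ 𝒜 := by
  intro b
  induction b using Finset.induction_on with
  | empty => intro h; simp at h
  | @insert a s ha IH =>
    intro _ hA
    rcases s.eq_empty_or_nonempty with hs | hs
    · subst hs
      simpa using hA a (Finset.mem_insert_self a ∅)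
    · rw [Finset.set_biInter_insert]
      exact hcl _ (hA a (Finset.mem_insert_self a s)) _
        (IH hs fun n hn => hA n (Finset.mem_insert_of_mem hn))

lemma finset_biUnion_mem {𝒜 : Set (Set X)} (hcl : ∀ A ∈ 𝒜, ∀ B ∈ 𝒜, A ∪ B ∈ 𝒜)
    (A : ℕ → Set X) :
    ∀ b : Finset ℕ, b.Nonempty → (∀ n ∈ b, A n ∈ 𝒜) → (⋃ n ∈ b, A n) ∈ 𝒜 := by
  intro b
  induction b using Finset.induction_on with
  | empty => intro h; simp at h
  | @insert a s ha IH =>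
    intro _ hA
    rcases s.eq_empty_or_nonempty with hs | hs
    · subst hs
      simpa using hA a (Finset.mem_insert_self a ∅)
    · rw [Finset.set_biUnion_insert]
      exact hcl _ (hA a (Finset.mem_insert_self a s)) _
        (IH hs fun n hn => hA n (Finset.mem_insert_of_mem hn))

lemma biInter_inter_biInter {c : Finset ℕ} (hc : c.Nonempty) (G : Set X) (B : ℕ → Set X) :
    (⋂ m ∈ c, (G ∩ B m)) = G ∩ ⋂ m ∈ c, B m := by
  obtain ⟨m₀, hm₀⟩ := hc
  ext x
  simp only [Set.mem_iInter, Set.mem_inter_iff]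
  constructor
  · intro h
    exact ⟨(h m₀ hm₀).1, fun m hm => (h m hm).2⟩
  · rintro ⟨h1, h2⟩ m hm
    exact ⟨h1, h2 m hm⟩

lemma biUnion_union_biUnion {c : Finset ℕ} (hc : c.Nonempty) (G : Set X) (B : ℕ → Set X) :
    (⋃ m ∈ c, (G ∪ B m)) = G ∪ ⋃ m ∈ c, B m := by
  obtain ⟨m₀, hm₀⟩ := hc
  ext x
  simp only [Set.mem_iUnion, Set.mem_union]
  constructor
  · rintro ⟨m, hm, h | h⟩
    · exact Or.inl h
    · exact Or.inr ⟨m, hm, h⟩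
  · rintro (h | ⟨m, hm, h⟩)
    · exact ⟨m₀, hm₀, Or.inl h⟩
    · exact ⟨m, hm, Or.inr h⟩

lemma inter_biUnion' (P : Set X) (t : Finset ℕ) (B : ℕ → Set X) :
    (⋃ m ∈ t, (P ∩ B m)) = P ∩ ⋃ m ∈ t, B m := by
  ext x; simp only [Set.mem_iUnion, Set.mem_inter_iff]; tauto

lemma union_biInter' (P : Set X) (t : Finset ℕ) (B : ℕ → Set X) :
    (⋂ m ∈ t, (P ∪ B m)) = P ∪ ⋂ m ∈ t, B m := by
  ext x
  simp only [Set.mem_iInter, Set.mem_union]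
  constructor
  · intro h
    by_cases hx : x ∈ P
    · exact Or.inl hx
    · exact Or.inr fun i hi => (h i hi).resolve_left hx
  · rintro (h | h) i hi
    exacts [Or.inl h, Or.inr (h i hi)]

end CapSide

section CapMain

variable {X Y : Type*} [AddCommGroup Y] [Module ℝ Y]

/-- representation as a finite union of members of `𝒜` -/
def HasRepU (𝒜 : Set (Set X)) (E : Set X) : Prop :=
  ∃ N, 0 < N ∧ ∃ A : ℕ → Set X,
    (∀ n ∈ Finset.range N, A n ∈ 𝒜) ∧ E = ⋃ n ∈ Finset.range N, A n

noncomputable def capSum (Φ : Set X → Y) (N : ℕ) (A : ℕ → Set X) : Y :=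
  ∑ b ∈ (Finset.range N).powerset.filter (· ≠ ∅), nu b • Φ (⋂ n ∈ b, A n)

lemma cap_key {𝒜 : Set (Set X)} {Φ : Set X → Y}
    (hcl : ∀ A ∈ 𝒜, ∀ B ∈ 𝒜, A ∩ B ∈ 𝒜)
    (hΦ : CapSemiModular 𝒜 Φ) {M : ℕ} {B : ℕ → Set X} (hM : 0 < M)
    (hB : ∀ m ∈ Finset.range M, B m ∈ 𝒜)
    {P : Set X} (hP : P ∈ 𝒜) (hPE : P ⊆ ⋃ m ∈ Finset.range M, B m) :
    Φ P = ∑ c ∈ (Finset.range M).powerset.filter (· ≠ ∅),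
      nu c • Φ (P ∩ ⋂ m ∈ c, B m) := by
  have hrep : (⋃ m ∈ Finset.range M, (P ∩ B m)) = P := by
    rw [inter_biUnion']
    exact Set.inter_eq_left.mpr hPE
  have h1 := hΦ M hM (fun m => P ∩ B m)
    (fun m hm => hcl P hP (B m) (hB m hm)) (by rw [hrep]; exact hP)
  rw [hrep] at h1
  rw [h1]
  refine Finset.sum_congr rfl fun c hc => ?_
  rcases Finset.mem_filter.1 hc with ⟨-, hcne⟩
  rw [biInter_inter_biInter (Finset.nonempty_of_ne_empty hcne)]

lemma capSum_welldef {𝒜 : Set (Set X)} {Φ : Set X → Y}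
    (hcl : ∀ A ∈ 𝒜, ∀ B ∈ 𝒜, A ∩ B ∈ 𝒜)
    (hΦ : CapSemiModular 𝒜 Φ) {N M : ℕ} {A B : ℕ → Set X}
    (hN : 0 < N) (hM : 0 < M)
    (hA : ∀ n ∈ Finset.range N, A n ∈ 𝒜) (hB : ∀ m ∈ Finset.range M, B m ∈ 𝒜)
    (hE : (⋃ n ∈ Finset.range N, A n) = ⋃ m ∈ Finset.range M, B m) :
    capSum Φ N A = capSum Φ M B := by
  have hGmem : ∀ b ∈ (Finset.range N).powerset.filter (· ≠ ∅), (⋂ n ∈ b, A n) ∈ 𝒜 := by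
    intro b hb
    rcases Finset.mem_filter.1 hb with ⟨hb1, hb2⟩
    exact finset_biInter_mem hcl A b (Finset.nonempty_of_ne_empty hb2)
      (fun n hn => hA n (Finset.mem_powerset.1 hb1 hn))
  have hHmem : ∀ c ∈ (Finset.range M).powerset.filter (· ≠ ∅), (⋂ m ∈ c, B m) ∈ 𝒜 := by
    intro c hc
    rcases Finset.mem_filter.1 hc with ⟨hc1, hc2⟩
    exact finset_biInter_mem hcl B c (Finset.nonempty_of_ne_empty hc2)
      (fun m hm => hB m (Finset.mem_powerset.1 hc1 hm))
  have hGsub : ∀ b ∈ (Finset.range N).powerset.filter (· ≠ ∅),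
      (⋂ n ∈ b, A n) ⊆ ⋃ m ∈ Finset.range M, B m := by
    intro b hb
    rcases Finset.mem_filter.1 hb with ⟨hb1, hb2⟩
    obtain ⟨n₀, hn₀⟩ := Finset.nonempty_of_ne_empty hb2
    calc (⋂ n ∈ b, A n) ⊆ A n₀ := Set.iInter₂_subset n₀ hn₀
    _ ⊆ ⋃ n ∈ Finset.range N, A n :=
        Set.subset_biUnion_of_mem (Finset.mem_powerset.1 hb1 hn₀)
    _ = _ := hE
  have hHsub : ∀ c ∈ (Finset.range M).powerset.filter (· ≠ ∅),
      (⋂ m ∈ c, B m) ⊆ ⋃ n ∈ Finset.range N, A n := by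
    intro c hc
    rcases Finset.mem_filter.1 hc with ⟨hc1, hc2⟩
    obtain ⟨m₀, hm₀⟩ := Finset.nonempty_of_ne_empty hc2
    calc (⋂ m ∈ c, B m) ⊆ B m₀ := Set.iInter₂_subset m₀ hm₀
    _ ⊆ ⋃ m ∈ Finset.range M, B m :=
        Set.subset_biUnion_of_mem (Finset.mem_powerset.1 hc1 hm₀)
    _ = _ := hE.symm
  calc capSum Φ N A
      = ∑ b ∈ (Finset.range N).powerset.filter (· ≠ ∅),
          ∑ c ∈ (Finset.range M).powerset.filter (· ≠ ∅),
            (nu b * nu c) • Φ ((⋂ n ∈ b, A n) ∩ ⋂ m ∈ c, B m) := by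
        refine Finset.sum_congr rfl fun b hb => ?_
        rw [cap_key hcl hΦ hM hB (hGmem b hb) (hGsub b hb), Finset.smul_sum]
        refine Finset.sum_congr rfl fun c hc => ?_
        rw [smul_smul]
    _ = ∑ c ∈ (Finset.range M).powerset.filter (· ≠ ∅),
          ∑ b ∈ (Finset.range N).powerset.filter (· ≠ ∅),
            (nu c * nu b) • Φ ((⋂ m ∈ c, B m) ∩ ⋂ n ∈ b, A n) := by
        rw [Finset.sum_comm]
        refine Finset.sum_congr rfl fun b _ => Finset.sum_congr rfl fun c _ => ?_
        rw [mul_comm, Set.inter_comm]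
    _ = capSum Φ M B := by
        refine Finset.sum_congr rfl fun c hc => ?_
        rw [cap_key hcl hΦ hN hA (hHmem c hc) (hHsub c hc), Finset.smul_sum]
        refine Finset.sum_congr rfl fun b hb => ?_
        rw [smul_smul]

end CapMain

section CapExt

variable {X Y : Type*} [AddCommGroup Y] [Module ℝ Y]

open Classical in
noncomputable def capExt (𝒜 : Set (Set X)) (Φ : Set X → Y) : Set X → Y := fun E =>
  if h : HasRepU 𝒜 E then
    capSum Φ h.choose h.choose_spec.2.choose else Φ E

lemma capExt_eq {𝒜 : Set (Set X)} {Φ : Set X → Y}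
    (hcl : ∀ A ∈ 𝒜, ∀ B ∈ 𝒜, A ∩ B ∈ 𝒜) (hΦ : CapSemiModular 𝒜 Φ)
    {E : Set X} {N : ℕ} {A : ℕ → Set X} (hN : 0 < N)
    (hA : ∀ n ∈ Finset.range N, A n ∈ 𝒜) (hE : E = ⋃ n ∈ Finset.range N, A n) :
    capExt 𝒜 Φ E = capSum Φ N A := by
  have h : HasRepU 𝒜 E := ⟨N, hN, A, hA, hE⟩
  classical
  rw [capExt]
  rw [dif_pos h]
  have hN' := h.choose_spec.1
  have hA' := h.choose_spec.2.choose_spec.1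
  have hE' := h.choose_spec.2.choose_spec.2
  exact capSum_welldef hcl hΦ hN' hN hA' hA (hE' ▸ hE)

lemma hasRepU_mem {𝒜 : Set (Set X)} {A : Set X} (hA : A ∈ 𝒜) : HasRepU 𝒜 A :=
  ⟨1, one_pos, fun _ => A, fun _ _ => hA, by simp⟩

lemma capExt_extends {𝒜 : Set (Set X)} {Φ : Set X → Y}
    (hcl : ∀ A ∈ 𝒜, ∀ B ∈ 𝒜, A ∩ B ∈ 𝒜) (hΦ : CapSemiModular 𝒜 Φ)
    {A : Set X} (hA : A ∈ 𝒜) : capExt 𝒜 Φ A = Φ A := by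
  rw [capExt_eq hcl hΦ one_pos (fun _ _ => hA) (by simp : A = ⋃ n ∈ Finset.range 1, A)]
  rw [capSum]
  rw [show Finset.range 1 = {0} from rfl]
  rw [show ({0} : Finset ℕ).powerset.filter (· ≠ ∅) = {{0}} from rfl]
  simp [nu]

lemma hasRepU_union {𝒜 : Set (Set X)} {E F : Set X}
    (hE : HasRepU 𝒜 E) (hF : HasRepU 𝒜 F) : HasRepU 𝒜 (E ∪ F) := by
  obtain ⟨N, hN, A, hA, hE⟩ := hE
  obtain ⟨M, hM, B, hB, hF⟩ := hF
  refine ⟨N + M, by omega, fun k => if k < N then A k else B (k - N), ?_, ?_⟩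
  · intro k hk
    rw [Finset.mem_range] at hk
    by_cases h : k < N
    · simpa [h] using hA k (Finset.mem_range.2 h)
    · simpa [h] using hB (k - N) (Finset.mem_range.2 (by omega))
  · subst hE hF
    ext x
    simp only [Set.mem_union, Set.mem_iUnion, Finset.mem_range]
    constructor
    · rintro (⟨n, hn, hx⟩ | ⟨m, hm, hx⟩)
      · exact ⟨n, by omega, by simp [hn, hx]⟩
      · refine ⟨N + m, by omega, ?_⟩
        have : ¬ (N + m < N) := by omega
        simpa [this] using hx
    · rintro ⟨k, hk, hx⟩
      by_cases h : k < N
      · rw [if_pos h] at hx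
        exact Or.inl ⟨k, h, hx⟩
      · rw [if_neg h] at hx
        exact Or.inr ⟨k - N, by omega, hx⟩

lemma hasRepU_inter {𝒜 : Set (Set X)}
    (hcl : ∀ A ∈ 𝒜, ∀ B ∈ 𝒜, A ∩ B ∈ 𝒜) {E F : Set X}
    (hE : HasRepU 𝒜 E) (hF : HasRepU 𝒜 F) : HasRepU 𝒜 (E ∩ F) := by
  obtain ⟨N, hN, A, hA, hE⟩ := hE
  obtain ⟨M, hM, B, hB, hF⟩ := hF
  refine ⟨N * M, Nat.mul_pos hN hM, fun k => A (k / M) ∩ B (k % M), ?_, ?_⟩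
  · intro k hk
    rw [Finset.mem_range] at hk
    refine hcl _ (hA _ (Finset.mem_range.2 ?_)) _ (hB _ (Finset.mem_range.2 (Nat.mod_lt _ hM)))
    exact (Nat.div_lt_iff_lt_mul hM).2 (by omega)
  · subst hE hF
    ext x
    simp only [Set.mem_inter_iff, Set.mem_iUnion, Finset.mem_range]
    constructor
    · rintro ⟨⟨n, hn, hxa⟩, ⟨m, hm, hxb⟩⟩
      refine ⟨m + M * n, ?_, ?_⟩
      · calc m + M * n < M + M * n := by omega
          _ = M * (n + 1) := by ring
          _ ≤ M * N := Nat.mul_le_mul_left M (by omega)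
          _ = N * M := Nat.mul_comm M N
      · have h1 : (m + M * n) / M = n := by
          rw [Nat.add_mul_div_left _ _ hM, Nat.div_eq_of_lt hm, Nat.zero_add]
        have h2 : (m + M * n) % M = m := by
          rw [Nat.add_mul_mod_self_left, Nat.mod_eq_of_lt hm]
        rw [h1, h2]
        exact ⟨hxa, hxb⟩
    · rintro ⟨k, hk, hxa, hxb⟩
      exact ⟨⟨k / M, (Nat.div_lt_iff_lt_mul hM).2 (by omega), hxa⟩,
        ⟨k % M, Nat.mod_lt _ hM, hxb⟩⟩

end CapExt
section CapM1

variable {X Y : Type*} [AddCommGroup Y] [Module ℝ Y]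

lemma unionRep (N M : ℕ) (A B : ℕ → Set X) :
    (⋃ n ∈ Finset.range N, A n) ∪ (⋃ m ∈ Finset.range M, B m)
      = ⋃ k ∈ Finset.range (N + M), (if k < N then A k else B (k - N)) := by
  ext x
  simp only [Set.mem_union, Set.mem_iUnion, Finset.mem_range]
  constructor
  · rintro (⟨n, hn, hx⟩ | ⟨m, hm, hx⟩)
    · exact ⟨n, by omega, by simp [hn, hx]⟩
    · refine ⟨N + m, by omega, ?_⟩
      have h : ¬ (N + m < N) := by omega
      simpa [h] using hx
  · rintro ⟨k, hk, hx⟩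
    by_cases h : k < N
    · rw [if_pos h] at hx
      exact Or.inl ⟨k, h, hx⟩
    · rw [if_neg h] at hx
      exact Or.inr ⟨k - N, by omega, hx⟩

lemma nu_mul (b c : Finset ℕ) : nu b * nu c = (-1 : ℝ) ^ (b.card + c.card) := by
  rw [nu_eq, nu_eq, pow_add]; ring

lemma sum_powerset_split {M : Type*} [AddCommGroup M] (s : Finset ℕ) (g : Finset ℕ → M) :
    ∑ b ∈ s.powerset, g b = g ∅ + ∑ b ∈ s.powerset.filter (· ≠ ∅), g b := by
  rw [show s.powerset.filter (· ≠ ∅) = s.powerset.erase ∅ from Finset.filter_ne' _ _,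
    Finset.add_sum_erase _ g (Finset.empty_mem_powerset s)]

lemma cap_M1 {𝒜 : Set (Set X)} {Φ : Set X → Y}
    (hcl : ∀ A ∈ 𝒜, ∀ B ∈ 𝒜, A ∩ B ∈ 𝒜) (hΦ : CapSemiModular 𝒜 Φ)
    {N M : ℕ} {A B : ℕ → Set X} (hN : 0 < N) (hM : 0 < M)
    (hA : ∀ n ∈ Finset.range N, A n ∈ 𝒜) (hB : ∀ m ∈ Finset.range M, B m ∈ 𝒜) :
    capExt 𝒜 Φ ((⋃ n ∈ Finset.range N, A n) ∪ (⋃ m ∈ Finset.range M, B m))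
      = capSum Φ N A + capSum Φ M B
        - ∑ b ∈ (Finset.range N).powerset.filter (· ≠ ∅),
            ∑ c ∈ (Finset.range M).powerset.filter (· ≠ ∅),
              (nu b * nu c) • Φ ((⋂ n ∈ b, A n) ∩ ⋂ m ∈ c, B m) := by
  classical
  set C : ℕ → Set X := fun k => if k < N then A k else B (k - N) with hC
  have hCmem : ∀ k ∈ Finset.range (N + M), C k ∈ 𝒜 := by
    intro k hk
    rw [Finset.mem_range] at hk
    by_cases h : k < N
    · simpa [hC, h] using hA k (Finset.mem_range.2 h)
    · simpa [hC, h] using hB (k - N) (Finset.mem_range.2 (by omega))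
  rw [capExt_eq hcl hΦ (by omega : 0 < N + M) hCmem (unionRep N M A B)]
  -- term rewriting function
  have hterm : ∀ p ∈ (Finset.range N).powerset ×ˢ (Finset.range M).powerset,
      nu (p.1 ∪ p.2.image (· + N)) • Φ (⋂ k ∈ p.1 ∪ p.2.image (· + N), C k)
        = (-(-1 : ℝ) ^ (p.1.card + p.2.card)) •
            Φ ((⋂ n ∈ p.1, A n) ∩ ⋂ m ∈ p.2, B m) := by
    rintro ⟨b, c⟩ hp
    rcases Finset.mem_product.1 hp with ⟨hb, hc⟩
    rw [Finset.mem_powerset] at hb hc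
    have hdisj : Disjoint b (c.image (· + N)) := by
      rw [Finset.disjoint_left]
      intro k hk1 hk2
      have h1 : k < N := Finset.mem_range.1 (hb hk1)
      rcases Finset.mem_image.1 hk2 with ⟨m, _, rfl⟩
      omega
    have hcard : (b ∪ c.image (· + N)).card = b.card + c.card := by
      rw [Finset.card_union_of_disjoint hdisj,
        Finset.card_image_of_injective _ (fun x y h => by omega)]
    have hint : (⋂ k ∈ b ∪ c.image (· + N), C k)
        = (⋂ n ∈ b, A n) ∩ ⋂ m ∈ c, B m := by
      rw [Finset.set_biInter_inter]
      congr 1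
      · exact Set.iInter₂_congr fun k hk => if_pos (Finset.mem_range.1 (hb hk))
      · rw [Finset.set_biInter_finset_image]
        refine Set.iInter₂_congr fun m hm => ?_
        have h : ¬ (m + N < N) := by omega
        rw [hC]
        simp only [if_neg h, Nat.add_sub_cancel]
    rw [hint, nu_eq, hcard]
  -- the bijection between nonempty subsets of range (N+M) and pairs
  have hbij : capSum Φ (N + M) C
      = ∑ p ∈ ((Finset.range N).powerset ×ˢ (Finset.range M).powerset).erase (∅, ∅),
          (-(-1 : ℝ) ^ (p.1.card + p.2.card)) •
            Φ ((⋂ n ∈ p.1, A n) ∩ ⋂ m ∈ p.2, B m) := by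
    rw [capSum]
    refine Finset.sum_nbij'
      (fun d => (d.filter (· < N), (d.filter (fun k => ¬ k < N)).image (· - N)))
      (fun p => p.1 ∪ p.2.image (· + N)) ?_ ?_ ?_ ?_ ?_
    · -- maps into erase
      intro d hd
      rcases Finset.mem_filter.1 hd with ⟨hd1, hd2⟩
      rw [Finset.mem_powerset] at hd1
      refine Finset.mem_erase.2 ⟨?_, Finset.mem_product.2 ⟨?_, ?_⟩⟩
      · -- not both empty
        intro hcontra
        obtain ⟨k, hk⟩ := Finset.nonempty_of_ne_empty hd2
        by_cases h : k < N
        · have : k ∈ d.filter (· < N) := Finset.mem_filter.2 ⟨hk, h⟩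
          rw [show (d.filter (· < N)) = (∅ : Finset ℕ) from congrArg Prod.fst hcontra] at this
          simp at this
        · have : k - N ∈ (d.filter (fun k => ¬ k < N)).image (· - N) :=
            Finset.mem_image.2 ⟨k, Finset.mem_filter.2 ⟨hk, h⟩, rfl⟩
          rw [show ((d.filter (fun k => ¬ k < N)).image (· - N)) = (∅ : Finset ℕ)
            from congrArg Prod.snd hcontra] at this
          simp at this
      · exact Finset.mem_powerset.2 (fun k hk =>
          Finset.mem_range.2 (Finset.mem_filter.1 hk).2)
      · refine Finset.mem_powerset.2 (fun m hm => ?_)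
        rcases Finset.mem_image.1 hm with ⟨k, hk, rfl⟩
        rcases Finset.mem_filter.1 hk with ⟨hkd, hkN⟩
        have := Finset.mem_range.1 (hd1 hkd)
        exact Finset.mem_range.2 (by omega)
    · -- inverse maps into filter
      rintro ⟨b, c⟩ hp
      rcases Finset.mem_erase.1 hp with ⟨hne, hp'⟩
      rcases Finset.mem_product.1 hp' with ⟨hb, hc⟩
      rw [Finset.mem_powerset] at hb hc
      refine Finset.mem_filter.2 ⟨Finset.mem_powerset.2 ?_, ?_⟩
      · intro k hk
        rcases Finset.mem_union.1 hk with h | h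
        · exact Finset.mem_range.2 (by have := Finset.mem_range.1 (hb h); omega)
        · rcases Finset.mem_image.1 h with ⟨m, hm, rfl⟩
          exact Finset.mem_range.2 (by have := Finset.mem_range.1 (hc hm); omega)
      · -- nonempty
        intro hcontra
        apply hne
        have h1 : b = ∅ := by
          rcases Finset.eq_empty_or_nonempty b with h | h
          · exact h
          · obtain ⟨k, hk⟩ := h
            exact absurd (hcontra ▸ Finset.mem_union_left _ hk) (Finset.notMem_empty k)
        have h2 : c = ∅ := by
          rcases Finset.eq_empty_or_nonempty c with h | h
          · exact h
          · obtain ⟨m, hm⟩ := h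
            exact absurd (hcontra ▸ Finset.mem_union_right _
              (Finset.mem_image.2 ⟨m, hm, rfl⟩)) (Finset.notMem_empty (m + N))
        rw [h1, h2]
    · -- left inverse
      intro d hd
      rcases Finset.mem_filter.1 hd with ⟨hd1, -⟩
      rw [Finset.mem_powerset] at hd1
      ext k
      simp only [Finset.mem_union, Finset.mem_filter, Finset.mem_image]
      constructor
      · rintro (⟨hk, -⟩ | ⟨j, ⟨i, ⟨hi, hiN⟩, rfl⟩, rfl⟩)
        · exact hk
        · have : i - N + N = i := by omega
          rwa [this]
      · intro hk
        by_cases h : k < N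
        · exact Or.inl ⟨hk, h⟩
        · exact Or.inr ⟨k - N, ⟨k, ⟨hk, h⟩, rfl⟩, by omega⟩
    · -- right inverse
      rintro ⟨b, c⟩ hp
      rcases Finset.mem_erase.1 hp with ⟨-, hp'⟩
      rcases Finset.mem_product.1 hp' with ⟨hb, hc⟩
      rw [Finset.mem_powerset] at hb hc
      have hb' : ∀ k ∈ b, k < N := fun k hk => Finset.mem_range.1 (hb hk)
      have hc' : ∀ m ∈ c, m < M := fun m hm => Finset.mem_range.1 (hc hm)
      refine Prod.ext ?_ ?_
      · ext k
        simp only [Finset.mem_filter, Finset.mem_union, Finset.mem_image]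
        constructor
        · rintro ⟨(hk | ⟨m, hm, rfl⟩), hkN⟩
          · exact hk
          · omega
        · intro hk
          exact ⟨Or.inl hk, hb' k hk⟩
      · ext m
        simp only [Finset.mem_image, Finset.mem_filter, Finset.mem_union]
        constructor
        · rintro ⟨k, ⟨(hk | ⟨j, hj, rfl⟩), hkN⟩, rfl⟩
          · exact absurd (hb' k hk) hkN
          · simpa using hj
        · intro hm
          exact ⟨m + N, ⟨Or.inr ⟨m, hm, rfl⟩, by omega⟩, by omega⟩
    · -- terms agree
      intro d hd
      have hmem : ((fun d => (d.filter (· < N),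
          (d.filter (fun k => ¬ k < N)).image (· - N))) d)
          ∈ (Finset.range N).powerset ×ˢ (Finset.range M).powerset := by
        rcases Finset.mem_filter.1 hd with ⟨hd1, -⟩
        rw [Finset.mem_powerset] at hd1
        refine Finset.mem_product.2 ⟨?_, ?_⟩
        · exact Finset.mem_powerset.2 (fun k hk =>
            Finset.mem_range.2 (Finset.mem_filter.1 hk).2)
        · refine Finset.mem_powerset.2 (fun m hm => ?_)
          rcases Finset.mem_image.1 hm with ⟨k, hk, rfl⟩
          rcases Finset.mem_filter.1 hk with ⟨hkd, hkN⟩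
          have := Finset.mem_range.1 (hd1 hkd)
          exact Finset.mem_range.2 (by omega)
      have := hterm _ hmem
      rw [← this]
      -- now d = union of the two parts
      have hdu : (d.filter (· < N)) ∪ ((d.filter (fun k => ¬ k < N)).image (· - N)).image (· + N) = d := by
        rcases Finset.mem_filter.1 hd with ⟨hd1, -⟩
        rw [Finset.mem_powerset] at hd1
        ext k
        simp only [Finset.mem_union, Finset.mem_filter, Finset.mem_image]
        constructor
        · rintro (⟨hk, -⟩ | ⟨j, ⟨i, ⟨hi, hiN⟩, rfl⟩, rfl⟩)
          · exact hk
          · have : i - N + N = i := by omega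
            rwa [this]
        · intro hk
          by_cases h : k < N
          · exact Or.inl ⟨hk, h⟩
          · exact Or.inr ⟨k - N, ⟨k, ⟨hk, h⟩, rfl⟩, by omega⟩
      simp only
      rw [hdu]
  rw [hbij]
  -- now split the sum over pairs
  have hsplit : ∑ p ∈ ((Finset.range N).powerset ×ˢ (Finset.range M).powerset).erase (∅, ∅),
      (-(-1 : ℝ) ^ (p.1.card + p.2.card)) • Φ ((⋂ n ∈ p.1, A n) ∩ ⋂ m ∈ p.2, B m)
      = capSum Φ N A + capSum Φ M B
        - ∑ b ∈ (Finset.range N).powerset.filter (· ≠ ∅),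
            ∑ c ∈ (Finset.range M).powerset.filter (· ≠ ∅),
              (nu b * nu c) • Φ ((⋂ n ∈ b, A n) ∩ ⋂ m ∈ c, B m) := by
    set F : Finset ℕ → Finset ℕ → Y := fun b c =>
      (-(-1 : ℝ) ^ (b.card + c.card)) • Φ ((⋂ n ∈ b, A n) ∩ ⋂ m ∈ c, B m) with hF
    have hmem00 : ((∅, ∅) : Finset ℕ × Finset ℕ)
        ∈ (Finset.range N).powerset ×ˢ (Finset.range M).powerset :=
      Finset.mem_product.2 ⟨Finset.empty_mem_powerset _, Finset.empty_mem_powerset _⟩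
    have e1 : ∑ p ∈ (Finset.range N).powerset ×ˢ (Finset.range M).powerset, F p.1 p.2
        = F ∅ ∅ + ∑ p ∈ ((Finset.range N).powerset ×ˢ (Finset.range M).powerset).erase (∅, ∅),
            F p.1 p.2 := by
      rw [Finset.add_sum_erase _ (fun p => F p.1 p.2) hmem00]
    have e2 : ∑ p ∈ (Finset.range N).powerset ×ˢ (Finset.range M).powerset, F p.1 p.2
        = F ∅ ∅ + ∑ b ∈ (Finset.range N).powerset.filter (· ≠ ∅), F b ∅
          + ∑ c ∈ (Finset.range M).powerset.filter (· ≠ ∅), F ∅ c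
          + ∑ b ∈ (Finset.range N).powerset.filter (· ≠ ∅),
              ∑ c ∈ (Finset.range M).powerset.filter (· ≠ ∅), F b c := by
      rw [Finset.sum_product]
      rw [sum_powerset_split (Finset.range N) (fun b => ∑ c ∈ (Finset.range M).powerset, F b c)]
      rw [sum_powerset_split (Finset.range M) (F ∅)]
      rw [Finset.sum_congr rfl (fun b _ => sum_powerset_split (Finset.range M) (F b))]
      rw [Finset.sum_add_distrib]
      abel
    have hFb : ∀ b ∈ (Finset.range N).powerset.filter (· ≠ ∅), F b ∅ = nu b • Φ (⋂ n ∈ b, A n) := by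
      intro b _
      rw [hF]
      simp only [Finset.card_empty, Nat.add_zero]
      rw [show (⋂ m ∈ (∅ : Finset ℕ), B m) = Set.univ by simp, Set.inter_univ, ← nu_eq]
    have hFc : ∀ c ∈ (Finset.range M).powerset.filter (· ≠ ∅), F ∅ c = nu c • Φ (⋂ m ∈ c, B m) := by
      intro c _
      rw [hF]
      simp only [Finset.card_empty, Nat.zero_add]
      rw [show (⋂ n ∈ (∅ : Finset ℕ), A n) = Set.univ by simp, Set.univ_inter, ← nu_eq]
    have hFm : ∀ b ∈ (Finset.range N).powerset.filter (· ≠ ∅),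
        ∀ c ∈ (Finset.range M).powerset.filter (· ≠ ∅),
        F b c = -((nu b * nu c) • Φ ((⋂ n ∈ b, A n) ∩ ⋂ m ∈ c, B m)) := by
      intro b _ c _
      rw [hF, nu_mul, ← neg_smul]
    calc ∑ p ∈ ((Finset.range N).powerset ×ˢ (Finset.range M).powerset).erase (∅, ∅), F p.1 p.2
        = ∑ b ∈ (Finset.range N).powerset.filter (· ≠ ∅), F b ∅
          + ∑ c ∈ (Finset.range M).powerset.filter (· ≠ ∅), F ∅ c
          + ∑ b ∈ (Finset.range N).powerset.filter (· ≠ ∅),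
              ∑ c ∈ (Finset.range M).powerset.filter (· ≠ ∅), F b c := by
          have := e1.symm.trans e2
          abel_nf at this ⊢
          linear_combination (norm := abel) this
      _ = _ := by
          rw [Finset.sum_congr rfl hFb, Finset.sum_congr rfl hFc,
            Finset.sum_congr rfl (fun b hb => Finset.sum_congr rfl (fun c hc => hFm b hb c hc)),
            capSum, capSum]
          simp only [Finset.sum_neg_distrib]
          abel
  exact hsplit

end CapM1
section CapM2

variable {X Y : Type*} [AddCommGroup Y] [Module ℝ Y]

lemma interRep {N M : ℕ} (hM : 0 < M) (A B : ℕ → Set X) :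
    (⋃ n ∈ Finset.range N, A n) ∩ (⋃ m ∈ Finset.range M, B m)
      = ⋃ k ∈ Finset.range (N * M), (A (k / M) ∩ B (k % M)) := by
  ext x
  simp only [Set.mem_inter_iff, Set.mem_iUnion, Finset.mem_range]
  constructor
  · rintro ⟨⟨n, hn, hxa⟩, ⟨m, hm, hxb⟩⟩
    refine ⟨m + M * n, ?_, ?_⟩
    · calc m + M * n < M + M * n := by omega
        _ = M * (n + 1) := by ring
        _ ≤ M * N := Nat.mul_le_mul_left M (by omega)
        _ = N * M := Nat.mul_comm M N
    · have h1 : (m + M * n) / M = n := by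
        rw [Nat.add_mul_div_left _ _ hM, Nat.div_eq_of_lt hm, Nat.zero_add]
      have h2 : (m + M * n) % M = m := by
        rw [Nat.add_mul_mod_self_left, Nat.mod_eq_of_lt hm]
      rw [h1, h2]
      exact ⟨hxa, hxb⟩
  · rintro ⟨k, hk, hxa, hxb⟩
    exact ⟨⟨k / M, (Nat.div_lt_iff_lt_mul hM).2 (by omega), hxa⟩,
      ⟨k % M, Nat.mod_lt _ hM, hxb⟩⟩

lemma biInterPtwise (p : Finset ℕ) (S T : ℕ → Set X) :
    (⋂ k ∈ p, (S k ∩ T k)) = (⋂ k ∈ p, S k) ∩ ⋂ k ∈ p, T k := by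
  ext x
  simp only [Set.mem_iInter, Set.mem_inter_iff]
  constructor
  · intro h
    exact ⟨fun k hk => (h k hk).1, fun k hk => (h k hk).2⟩
  · rintro ⟨h1, h2⟩ k hk
    exact ⟨h1 k hk, h2 k hk⟩

lemma fiber_nu_sum {N M : ℕ} (hM : 0 < M) {b c : Finset ℕ}
    (hb : b ⊆ Finset.range N) (hc : c ⊆ Finset.range M) (hbne : b ≠ ∅) (hcne : c ≠ ∅) :
    ∑ p ∈ ((Finset.range (N * M)).powerset.filter (· ≠ ∅)).filter
        (fun p => (p.image (· / M), p.image (· % M)) = (b, c)), nu p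
      = nu b * nu c := by
  classical
  have hb' : ∀ n ∈ b, n < N := fun n hn => Finset.mem_range.1 (hb hn)
  have hc' : ∀ m ∈ c, m < M := fun m hm => Finset.mem_range.1 (hc hm)
  have htrans : ∑ p ∈ ((Finset.range (N * M)).powerset.filter (· ≠ ∅)).filter
        (fun p => (p.image (· / M), p.image (· % M)) = (b, c)), nu p
      = ∑ q ∈ (b ×ˢ c).powerset.filter
          (fun q => q.image Prod.fst = b ∧ q.image Prod.snd = c),
          (-1 : ℝ) ^ (1 + q.card) := by
    refine Finset.sum_nbij' (fun p => p.image (fun k => (k / M, k % M)))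
      (fun q => q.image (fun x => x.2 + M * x.1)) ?_ ?_ ?_ ?_ ?_
    · -- maps to
      intro p hp
      rcases Finset.mem_filter.1 hp with ⟨hp1, hp2⟩
      rcases Finset.mem_filter.1 hp1 with ⟨-, -⟩
      have h1 : p.image (· / M) = b := congrArg Prod.fst hp2
      have h2 : p.image (· % M) = c := congrArg Prod.snd hp2
      refine Finset.mem_filter.2 ⟨Finset.mem_powerset.2 ?_, ?_, ?_⟩
      · intro x hx
        rcases Finset.mem_image.1 hx with ⟨k, hk, rfl⟩
        refine Finset.mem_product.2 ⟨?_, ?_⟩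
        · rw [← h1]; exact Finset.mem_image.2 ⟨k, hk, rfl⟩
        · rw [← h2]; exact Finset.mem_image.2 ⟨k, hk, rfl⟩
      · rw [Finset.image_image, ← h1]
        rfl
      · rw [Finset.image_image, ← h2]
        rfl
    · -- inverse maps to
      intro q hq
      rcases Finset.mem_filter.1 hq with ⟨hq1, hqf, hqs⟩
      rw [Finset.mem_powerset] at hq1
      have hxlt : ∀ x ∈ q, x.1 < N ∧ x.2 < M := by
        intro x hx
        rcases Finset.mem_product.1 (hq1 hx) with ⟨h1, h2⟩
        exact ⟨hb' _ h1, hc' _ h2⟩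
      refine Finset.mem_filter.2 ⟨Finset.mem_filter.2 ⟨Finset.mem_powerset.2 ?_, ?_⟩, ?_⟩
      · intro k hk
        rcases Finset.mem_image.1 hk with ⟨x, hx, rfl⟩
        obtain ⟨h1, h2⟩ := hxlt x hx
        refine Finset.mem_range.2 ?_
        calc x.2 + M * x.1 < M + M * x.1 := by omega
          _ = M * (x.1 + 1) := by ring
          _ ≤ M * N := Nat.mul_le_mul_left M (by omega)
          _ = N * M := Nat.mul_comm M N
      · -- nonempty
        intro hcontra
        have hqne : q.Nonempty := by
          rcases Finset.eq_empty_or_nonempty q with h | h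
          · rw [h] at hqf
            simp at hqf
            exact absurd hqf.symm hbne
          · exact h
        rw [Finset.image_eq_empty.1 hcontra] at hqf
        simp at hqf
        exact hbne hqf.symm
      · -- images
        have e1 : (q.image (fun x => x.2 + M * x.1)).image (· / M) = q.image Prod.fst := by
          rw [Finset.image_image]
          refine Finset.image_congr ?_
          intro x hx
          obtain ⟨-, h2⟩ := hxlt x hx
          simp only [Function.comp]
          rw [Nat.add_mul_div_left _ _ hM, Nat.div_eq_of_lt h2, Nat.zero_add]
        have e2 : (q.image (fun x => x.2 + M * x.1)).image (· % M) = q.image Prod.snd := by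
          rw [Finset.image_image]
          refine Finset.image_congr ?_
          intro x hx
          obtain ⟨-, h2⟩ := hxlt x hx
          simp only [Function.comp]
          rw [Nat.add_mul_mod_self_left, Nat.mod_eq_of_lt h2]
        rw [Prod.mk.injEq, e1, e2]
        exact ⟨hqf, hqs⟩
    · -- left inverse
      intro p hp
      show (p.image (fun k => (k / M, k % M))).image (fun x => x.2 + M * x.1) = p
      rw [Finset.image_image]
      have : ∀ k ∈ p, (Function.comp (fun x : ℕ × ℕ => x.2 + M * x.1)
          (fun k => (k / M, k % M))) k = id k := by
        intro k hk
        simp only [Function.comp, id]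
        exact Nat.mod_add_div k M
      rw [Finset.image_congr this, Finset.image_id]
    · -- right inverse
      intro q hq
      rcases Finset.mem_filter.1 hq with ⟨hq1, -⟩
      rw [Finset.mem_powerset] at hq1
      show (q.image (fun x => x.2 + M * x.1)).image (fun k => (k / M, k % M)) = q
      rw [Finset.image_image]
      have : ∀ x ∈ q, (Function.comp (fun k : ℕ => (k / M, k % M))
          (fun x : ℕ × ℕ => x.2 + M * x.1)) x = id x := by
        intro x hx
        rcases Finset.mem_product.1 (hq1 hx) with ⟨-, h2⟩
        have h2' : x.2 < M := hc' _ h2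
        simp only [Function.comp, id]
        rw [Nat.add_mul_div_left _ _ hM, Nat.div_eq_of_lt h2', Nat.zero_add,
          Nat.add_mul_mod_self_left, Nat.mod_eq_of_lt h2']
      rw [Finset.image_congr this, Finset.image_id]
    · -- terms
      intro p hp
      rcases Finset.mem_filter.1 hp with ⟨hp1, -⟩
      rcases Finset.mem_filter.1 hp1 with ⟨hp2, -⟩
      rw [Finset.mem_powerset] at hp2
      have hinj : Set.InjOn (fun k : ℕ => (k / M, k % M)) p := by
        intro k1 h1 k2 h2 he
        have e1 : k1 % M + M * (k1 / M) = k2 % M + M * (k2 / M) := by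
          rw [show k1 / M = k2 / M from congrArg Prod.fst he,
            show k1 % M = k2 % M from congrArg Prod.snd he]
        rw [Nat.mod_add_div, Nat.mod_add_div] at e1
        exact e1
      rw [nu, Finset.card_image_of_injOn hinj]
  rw [htrans, nu_mul]
  have : ∀ q ∈ (b ×ˢ c).powerset.filter
      (fun q => q.image Prod.fst = b ∧ q.image Prod.snd = c),
      (-1 : ℝ) ^ (1 + q.card) = -((-1 : ℝ) ^ q.card) := by
    intro q _
    rw [pow_add, pow_one]
    ring
  rw [Finset.sum_congr rfl this, Finset.sum_neg_distrib, ← Tsum]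
  rw [Tsum_eq, hval, if_neg hbne, if_neg hcne]
  ring

lemma cap_M2 {𝒜 : Set (Set X)} {Φ : Set X → Y}
    (hcl : ∀ A ∈ 𝒜, ∀ B ∈ 𝒜, A ∩ B ∈ 𝒜) (hΦ : CapSemiModular 𝒜 Φ)
    {N M : ℕ} {A B : ℕ → Set X} (hN : 0 < N) (hM : 0 < M)
    (hA : ∀ n ∈ Finset.range N, A n ∈ 𝒜) (hB : ∀ m ∈ Finset.range M, B m ∈ 𝒜) :
    capExt 𝒜 Φ ((⋃ n ∈ Finset.range N, A n) ∩ (⋃ m ∈ Finset.range M, B m))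
      = ∑ b ∈ (Finset.range N).powerset.filter (· ≠ ∅),
          ∑ c ∈ (Finset.range M).powerset.filter (· ≠ ∅),
            (nu b * nu c) • Φ ((⋂ n ∈ b, A n) ∩ ⋂ m ∈ c, B m) := by
  classical
  have hDmem : ∀ k ∈ Finset.range (N * M), A (k / M) ∩ B (k % M) ∈ 𝒜 := by
    intro k hk
    rw [Finset.mem_range] at hk
    refine hcl _ (hA _ (Finset.mem_range.2 ?_)) _ (hB _ (Finset.mem_range.2 (Nat.mod_lt _ hM)))
    exact (Nat.div_lt_iff_lt_mul hM).2 (by omega)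
  rw [capExt_eq hcl hΦ (Nat.mul_pos hN hM) hDmem (interRep hM A B), capSum]
  have hmaps : ∀ p ∈ (Finset.range (N * M)).powerset.filter (· ≠ ∅),
      (p.image (· / M), p.image (· % M))
        ∈ ((Finset.range N).powerset.filter (· ≠ ∅)) ×ˢ
          ((Finset.range M).powerset.filter (· ≠ ∅)) := by
    intro p hp
    rcases Finset.mem_filter.1 hp with ⟨hp1, hp2⟩
    rw [Finset.mem_powerset] at hp1
    have hpne := Finset.nonempty_of_ne_empty hp2
    refine Finset.mem_product.2 ⟨Finset.mem_filter.2 ⟨Finset.mem_powerset.2 ?_, ?_⟩,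
      Finset.mem_filter.2 ⟨Finset.mem_powerset.2 ?_, ?_⟩⟩
    · intro n hn
      rcases Finset.mem_image.1 hn with ⟨k, hk, rfl⟩
      have := Finset.mem_range.1 (hp1 hk)
      exact Finset.mem_range.2 ((Nat.div_lt_iff_lt_mul hM).2 (by omega))
    · exact Finset.nonempty_iff_ne_empty.1 (hpne.image _)
    · intro m hm
      rcases Finset.mem_image.1 hm with ⟨k, hk, rfl⟩
      exact Finset.mem_range.2 (Nat.mod_lt _ hM)
    · exact Finset.nonempty_iff_ne_empty.1 (hpne.image _)
  rw [← Finset.sum_fiberwise_of_maps_to hmaps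
    (fun p => nu p • Φ (⋂ k ∈ p, (A (k / M) ∩ B (k % M))))]
  rw [Finset.sum_product]
  refine Finset.sum_congr rfl fun b hb => Finset.sum_congr rfl fun c hc => ?_
  rcases Finset.mem_filter.1 hb with ⟨hb1, hb2⟩
  rcases Finset.mem_filter.1 hc with ⟨hc1, hc2⟩
  rw [Finset.mem_powerset] at hb1 hc1
  have hconst : ∀ p ∈ ((Finset.range (N * M)).powerset.filter (· ≠ ∅)).filter
      (fun p => (p.image (· / M), p.image (· % M)) = (b, c)),
      nu p • Φ (⋂ k ∈ p, (A (k / M) ∩ B (k % M)))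
        = nu p • Φ ((⋂ n ∈ b, A n) ∩ ⋂ m ∈ c, B m) := by
    intro p hp
    rcases Finset.mem_filter.1 hp with ⟨-, hp2⟩
    have h1 : p.image (· / M) = b := congrArg Prod.fst hp2
    have h2 : p.image (· % M) = c := congrArg Prod.snd hp2
    rw [biInterPtwise]
    rw [← h1, ← h2, Finset.set_biInter_finset_image, Finset.set_biInter_finset_image]
  rw [Finset.sum_congr rfl hconst, ← Finset.sum_smul]
  rw [fiber_nu_sum hM hb1 hc1 hb2 hc2]

end CapM2
section CapAssemble

variable {X Y : Type*} [AddCommGroup Y] [Module ℝ Y]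

lemma cap_modular {𝒜 : Set (Set X)} {Φ : Set X → Y}
    (hcl : ∀ A ∈ 𝒜, ∀ B ∈ 𝒜, A ∩ B ∈ 𝒜) (hΦ : CapSemiModular 𝒜 Φ)
    {E F : Set X} (hE : HasRepU 𝒜 E) (hF : HasRepU 𝒜 F) :
    capExt 𝒜 Φ (E ∪ F) + capExt 𝒜 Φ (E ∩ F) = capExt 𝒜 Φ E + capExt 𝒜 Φ F := by
  obtain ⟨N, hN, A, hA, hE'⟩ := hE
  obtain ⟨M, hM, B, hB, hF'⟩ := hF
  subst hE' hF'
  rw [cap_M1 hcl hΦ hN hM hA hB, cap_M2 hcl hΦ hN hM hA hB,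
    capExt_eq hcl hΦ hN hA rfl, capExt_eq hcl hΦ hM hB rfl]
  abel

/-- inclusion–exclusion for a modular function on a lattice of sets (cap form) -/
lemma modular_capIE {𝒜 : Set (Set X)} {Φ : Set X → Y}
    (hclI : ∀ A ∈ 𝒜, ∀ B ∈ 𝒜, A ∩ B ∈ 𝒜) (hclU : ∀ A ∈ 𝒜, ∀ B ∈ 𝒜, A ∪ B ∈ 𝒜)
    (hΦ : Modular 𝒜 Φ) :
    ∀ N : ℕ, 0 < N → ∀ A : ℕ → Set X, (∀ n ∈ Finset.range N, A n ∈ 𝒜) →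
      Φ (⋃ n ∈ Finset.range N, A n)
        = ∑ b ∈ (Finset.range N).powerset.filter (· ≠ ∅), nu b • Φ (⋂ n ∈ b, A n) := by
  intro N hN
  induction N, hN using Nat.le_induction with
  | base =>
    intro A hA
    rw [show Finset.range 1 = {0} from rfl,
      show (({0} : Finset ℕ).powerset.filter (· ≠ ∅)) = {{0}} from rfl]
    simp [nu]
  | succ N hN IH =>
    intro A hA
    have hA' : ∀ n ∈ Finset.range N, A n ∈ 𝒜 :=
      fun n hn => hA n (Finset.mem_range.2 (by have := Finset.mem_range.1 hn; omega))
    have hAN : A N ∈ 𝒜 := hA N (Finset.mem_range.2 (by omega))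
    have hU : (⋃ n ∈ Finset.range N, A n) ∈ 𝒜 :=
      finset_biUnion_mem hclU A (Finset.range N)
        (Finset.nonempty_range_iff.2 (by omega)) hA'
    have hsplit : (⋃ n ∈ Finset.range (N + 1), A n)
        = (⋃ n ∈ Finset.range N, A n) ∪ A N := by
      rw [Finset.range_add_one, Finset.set_biUnion_insert, Set.union_comm]
    have hmod := hΦ _ hU _ hAN
    have hUcap : (⋃ n ∈ Finset.range N, A n) ∩ A N
        = ⋃ n ∈ Finset.range N, (A n ∩ A N) := by
      rw [Set.inter_comm, ← inter_biUnion' (A N) (Finset.range N) A]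
      exact Set.iUnion₂_congr fun n _ => Set.inter_comm _ _
    have hΦU : Φ ((⋃ n ∈ Finset.range N, A n) ∪ A N)
        = Φ (⋃ n ∈ Finset.range N, A n) + Φ (A N)
          - Φ ((⋃ n ∈ Finset.range N, A n) ∩ A N) := by
      rw [eq_sub_iff_add_eq, hmod]
    rw [hsplit, hΦU, IH A hA', hUcap,
      IH (fun n => A n ∩ A N) (fun n hn => hclI _ (hA' n hn) _ hAN)]
    have hps : (Finset.range (N + 1)).powerset.filter (· ≠ ∅)
        = ((Finset.range N).powerset.filter (· ≠ ∅))
          ∪ (Finset.range N).powerset.image (insert N) := by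
      rw [Finset.range_add_one, Finset.powerset_insert, Finset.filter_union]
      congr 1
      refine Finset.filter_true_of_mem ?_
      intro b hb
      rcases Finset.mem_image.1 hb with ⟨a, -, rfl⟩
      exact fun h => by simpa [h] using Finset.mem_insert_self N a
    have hdisj : Disjoint ((Finset.range N).powerset.filter (· ≠ ∅))
        ((Finset.range N).powerset.image (insert N)) := by
      rw [Finset.disjoint_left]
      intro b hb1 hb2
      rcases Finset.mem_filter.1 hb1 with ⟨hb1', -⟩
      rw [Finset.mem_powerset] at hb1'
      rcases Finset.mem_image.1 hb2 with ⟨a, -, rfl⟩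
      have : N ∈ Finset.range N := hb1' (Finset.mem_insert_self N a)
      simp at this
    rw [hps, Finset.sum_union hdisj]
    have hinj : ∀ a ∈ (Finset.range N).powerset, ∀ a' ∈ (Finset.range N).powerset,
        insert N a = insert N a' → a = a' := by
      intro a ha a' ha' he
      rw [Finset.mem_powerset] at ha ha'
      have hNa : N ∉ a := fun h => by have := Finset.mem_range.1 (ha h); omega
      have hNa' : N ∉ a' := fun h => by have := Finset.mem_range.1 (ha' h); omega
      rw [← Finset.erase_insert hNa, ← Finset.erase_insert hNa', he]
    rw [Finset.sum_image hinj]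
    rw [sum_powerset_split (Finset.range N)
      (fun b => nu (insert N b) • Φ (⋂ n ∈ insert N b, A n))]
    have hempty : nu (insert N (∅ : Finset ℕ)) • Φ (⋂ n ∈ insert N (∅ : Finset ℕ), A n)
        = Φ (A N) := by
      rw [Finset.set_biInter_insert]
      have h1 : nu (insert N (∅ : Finset ℕ)) = 1 := by
        rw [nu]
        norm_num
      rw [h1]
      simp
    have hterm : ∀ b ∈ (Finset.range N).powerset.filter (· ≠ ∅),
        nu (insert N b) • Φ (⋂ n ∈ insert N b, A n)
          = -(nu b • Φ (⋂ n ∈ b, (A n ∩ A N))) := by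
      intro b hb
      rcases Finset.mem_filter.1 hb with ⟨hb1, hb2⟩
      rw [Finset.mem_powerset] at hb1
      have hNb : N ∉ b := fun h => by have := Finset.mem_range.1 (hb1 h); omega
      have hbint : (⋂ n ∈ b, (A n ∩ A N)) = A N ∩ ⋂ n ∈ b, A n := by
        rw [Set.iInter₂_congr (fun n (hn : n ∈ b) => Set.inter_comm (A n) (A N)),
          biInter_inter_biInter (Finset.nonempty_of_ne_empty hb2)]
      rw [hbint, nu_insert hNb, Finset.set_biInter_insert, neg_smul]
    rw [Finset.sum_congr rfl hterm, Finset.sum_neg_distrib, hempty]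
    abel

end CapAssemble
section CupMain

variable {X Y : Type*} [AddCommGroup Y] [Module ℝ Y]

/-- representation as a finite intersection of members of `𝒜` -/
def HasRepI (𝒜 : Set (Set X)) (E : Set X) : Prop :=
  ∃ N, 0 < N ∧ ∃ A : ℕ → Set X,
    (∀ n ∈ Finset.range N, A n ∈ 𝒜) ∧ E = ⋂ n ∈ Finset.range N, A n

noncomputable def cupSum (Φ : Set X → Y) (N : ℕ) (A : ℕ → Set X) : Y :=
  ∑ b ∈ (Finset.range N).powerset.filter (· ≠ ∅), nu b • Φ (⋃ n ∈ b, A n)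

lemma cup_key {𝒜 : Set (Set X)} {Φ : Set X → Y}
    (hcl : ∀ A ∈ 𝒜, ∀ B ∈ 𝒜, A ∪ B ∈ 𝒜)
    (hΦ : CupSemiModular 𝒜 Φ) {M : ℕ} {B : ℕ → Set X} (hM : 0 < M)
    (hB : ∀ m ∈ Finset.range M, B m ∈ 𝒜)
    {P : Set X} (hP : P ∈ 𝒜) (hPE : (⋂ m ∈ Finset.range M, B m) ⊆ P) :
    Φ P = ∑ c ∈ (Finset.range M).powerset.filter (· ≠ ∅),
      nu c • Φ (P ∪ ⋃ m ∈ c, B m) := by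
  have hrep : (⋂ m ∈ Finset.range M, (P ∪ B m)) = P := by
    rw [union_biInter']
    exact Set.union_eq_left.mpr hPE
  have h1 := hΦ M hM (fun m => P ∪ B m)
    (fun m hm => hcl P hP (B m) (hB m hm)) (by rw [hrep]; exact hP)
  rw [hrep] at h1
  rw [h1]
  refine Finset.sum_congr rfl fun c hc => ?_
  rcases Finset.mem_filter.1 hc with ⟨-, hcne⟩
  rw [biUnion_union_biUnion (Finset.nonempty_of_ne_empty hcne)]

lemma cupSum_welldef {𝒜 : Set (Set X)} {Φ : Set X → Y}
    (hcl : ∀ A ∈ 𝒜, ∀ B ∈ 𝒜, A ∪ B ∈ 𝒜)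
    (hΦ : CupSemiModular 𝒜 Φ) {N M : ℕ} {A B : ℕ → Set X}
    (hN : 0 < N) (hM : 0 < M)
    (hA : ∀ n ∈ Finset.range N, A n ∈ 𝒜) (hB : ∀ m ∈ Finset.range M, B m ∈ 𝒜)
    (hE : (⋂ n ∈ Finset.range N, A n) = ⋂ m ∈ Finset.range M, B m) :
    cupSum Φ N A = cupSum Φ M B := by
  have hGmem : ∀ b ∈ (Finset.range N).powerset.filter (· ≠ ∅), (⋃ n ∈ b, A n) ∈ 𝒜 := by
    intro b hb
    rcases Finset.mem_filter.1 hb with ⟨hb1, hb2⟩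
    exact finset_biUnion_mem hcl A b (Finset.nonempty_of_ne_empty hb2)
      (fun n hn => hA n (Finset.mem_powerset.1 hb1 hn))
  have hHmem : ∀ c ∈ (Finset.range M).powerset.filter (· ≠ ∅), (⋃ m ∈ c, B m) ∈ 𝒜 := by
    intro c hc
    rcases Finset.mem_filter.1 hc with ⟨hc1, hc2⟩
    exact finset_biUnion_mem hcl B c (Finset.nonempty_of_ne_empty hc2)
      (fun m hm => hB m (Finset.mem_powerset.1 hc1 hm))
  have hGsub : ∀ b ∈ (Finset.range N).powerset.filter (· ≠ ∅),
      (⋂ m ∈ Finset.range M, B m) ⊆ ⋃ n ∈ b, A n := by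
    intro b hb
    rcases Finset.mem_filter.1 hb with ⟨hb1, hb2⟩
    obtain ⟨n₀, hn₀⟩ := Finset.nonempty_of_ne_empty hb2
    calc (⋂ m ∈ Finset.range M, B m) = ⋂ n ∈ Finset.range N, A n := hE.symm
    _ ⊆ A n₀ := Set.iInter₂_subset n₀ (Finset.mem_powerset.1 hb1 hn₀)
    _ ⊆ ⋃ n ∈ b, A n := Set.subset_biUnion_of_mem hn₀
  have hHsub : ∀ c ∈ (Finset.range M).powerset.filter (· ≠ ∅),
      (⋂ n ∈ Finset.range N, A n) ⊆ ⋃ m ∈ c, B m := by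
    intro c hc
    rcases Finset.mem_filter.1 hc with ⟨hc1, hc2⟩
    obtain ⟨m₀, hm₀⟩ := Finset.nonempty_of_ne_empty hc2
    calc (⋂ n ∈ Finset.range N, A n) = ⋂ m ∈ Finset.range M, B m := hE
    _ ⊆ B m₀ := Set.iInter₂_subset m₀ (Finset.mem_powerset.1 hc1 hm₀)
    _ ⊆ ⋃ m ∈ c, B m := Set.subset_biUnion_of_mem hm₀
  calc cupSum Φ N A
      = ∑ b ∈ (Finset.range N).powerset.filter (· ≠ ∅),
          ∑ c ∈ (Finset.range M).powerset.filter (· ≠ ∅),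
            (nu b * nu c) • Φ ((⋃ n ∈ b, A n) ∪ ⋃ m ∈ c, B m) := by
        refine Finset.sum_congr rfl fun b hb => ?_
        rw [cup_key hcl hΦ hM hB (hGmem b hb) (hGsub b hb), Finset.smul_sum]
        refine Finset.sum_congr rfl fun c hc => ?_
        rw [smul_smul]
    _ = ∑ c ∈ (Finset.range M).powerset.filter (· ≠ ∅),
          ∑ b ∈ (Finset.range N).powerset.filter (· ≠ ∅),
            (nu c * nu b) • Φ ((⋃ m ∈ c, B m) ∪ ⋃ n ∈ b, A n) := by
        rw [Finset.sum_comm]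
        refine Finset.sum_congr rfl fun b _ => Finset.sum_congr rfl fun c _ => ?_
        rw [mul_comm, Set.union_comm]
    _ = cupSum Φ M B := by
        refine Finset.sum_congr rfl fun c hc => ?_
        rw [cup_key hcl hΦ hN hA (hHmem c hc) (hHsub c hc), Finset.smul_sum]
        refine Finset.sum_congr rfl fun b hb => ?_
        rw [smul_smul]

open Classical in
noncomputable def cupExt (𝒜 : Set (Set X)) (Φ : Set X → Y) : Set X → Y := fun E =>
  if h : HasRepI 𝒜 E then
    cupSum Φ h.choose h.choose_spec.2.choose else Φ E

lemma cupExt_eq {𝒜 : Set (Set X)} {Φ : Set X → Y}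
    (hcl : ∀ A ∈ 𝒜, ∀ B ∈ 𝒜, A ∪ B ∈ 𝒜) (hΦ : CupSemiModular 𝒜 Φ)
    {E : Set X} {N : ℕ} {A : ℕ → Set X} (hN : 0 < N)
    (hA : ∀ n ∈ Finset.range N, A n ∈ 𝒜) (hE : E = ⋂ n ∈ Finset.range N, A n) :
    cupExt 𝒜 Φ E = cupSum Φ N A := by
  have h : HasRepI 𝒜 E := ⟨N, hN, A, hA, hE⟩
  classical
  rw [cupExt]
  rw [dif_pos h]
  have hN' := h.choose_spec.1
  have hA' := h.choose_spec.2.choose_spec.1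
  have hE' := h.choose_spec.2.choose_spec.2
  exact cupSum_welldef hcl hΦ hN' hN hA' hA (hE' ▸ hE)

lemma hasRepI_mem {𝒜 : Set (Set X)} {A : Set X} (hA : A ∈ 𝒜) : HasRepI 𝒜 A :=
  ⟨1, one_pos, fun _ => A, fun _ _ => hA, by simp⟩

lemma cupExt_extends {𝒜 : Set (Set X)} {Φ : Set X → Y}
    (hcl : ∀ A ∈ 𝒜, ∀ B ∈ 𝒜, A ∪ B ∈ 𝒜) (hΦ : CupSemiModular 𝒜 Φ)
    {A : Set X} (hA : A ∈ 𝒜) : cupExt 𝒜 Φ A = Φ A := by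
  rw [cupExt_eq hcl hΦ one_pos (fun _ _ => hA) (by simp : A = ⋂ n ∈ Finset.range 1, A)]
  rw [cupSum]
  rw [show Finset.range 1 = {0} from rfl]
  rw [show ({0} : Finset ℕ).powerset.filter (· ≠ ∅) = {{0}} from rfl]
  simp [nu]

lemma hasRepI_inter {𝒜 : Set (Set X)} {E F : Set X}
    (hE : HasRepI 𝒜 E) (hF : HasRepI 𝒜 F) : HasRepI 𝒜 (E ∩ F) := by
  obtain ⟨N, hN, A, hA, hE⟩ := hE
  obtain ⟨M, hM, B, hB, hF⟩ := hF
  refine ⟨N + M, by omega, fun k => if k < N then A k else B (k - N), ?_, ?_⟩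
  · intro k hk
    rw [Finset.mem_range] at hk
    by_cases h : k < N
    · simpa [h] using hA k (Finset.mem_range.2 h)
    · simpa [h] using hB (k - N) (Finset.mem_range.2 (by omega))
  · subst hE hF
    ext x
    simp only [Set.mem_inter_iff, Set.mem_iInter, Finset.mem_range]
    constructor
    · rintro ⟨h1, h2⟩ k hk
      by_cases h : k < N
      · simpa [h] using h1 k h
      · have := h2 (k - N) (by omega)
        simpa [h] using this
    · intro h
      constructor
      · intro n hn
        have := h n (by omega)
        simpa [hn] using this
      · intro m hm
        have := h (N + m) (by omega)
        have hnotlt : ¬ (N + m < N) := by omega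
        simpa [hnotlt] using this

lemma hasRepI_union {𝒜 : Set (Set X)}
    (hcl : ∀ A ∈ 𝒜, ∀ B ∈ 𝒜, A ∪ B ∈ 𝒜) {E F : Set X}
    (hE : HasRepI 𝒜 E) (hF : HasRepI 𝒜 F) : HasRepI 𝒜 (E ∪ F) := by
  obtain ⟨N, hN, A, hA, hE⟩ := hE
  obtain ⟨M, hM, B, hB, hF⟩ := hF
  refine ⟨N * M, Nat.mul_pos hN hM, fun k => A (k / M) ∪ B (k % M), ?_, ?_⟩
  · intro k hk
    rw [Finset.mem_range] at hk
    refine hcl _ (hA _ (Finset.mem_range.2 ?_)) _ (hB _ (Finset.mem_range.2 (Nat.mod_lt _ hM)))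
    exact (Nat.div_lt_iff_lt_mul hM).2 (by omega)
  · subst hE hF
    ext x
    simp only [Set.mem_union, Set.mem_iInter, Finset.mem_range]
    constructor
    · rintro (h | h) k hk
      · exact Or.inl (h _ ((Nat.div_lt_iff_lt_mul hM).2 (by omega)))
      · exact Or.inr (h _ (Nat.mod_lt _ hM))
    · intro h
      by_cases hx : ∀ n, n < N → x ∈ A n
      · exact Or.inl (fun n hn => hx n hn)
      · push_neg at hx
        obtain ⟨n, hn, hxn⟩ := hx
        refine Or.inr (fun m hm => ?_)
        have := h (m + M * n) (by
          calc m + M * n < M + M * n := by omega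
            _ = M * (n + 1) := by ring
            _ ≤ M * N := Nat.mul_le_mul_left M (by omega)
            _ = N * M := Nat.mul_comm M N)
        have h1 : (m + M * n) / M = n := by
          rw [Nat.add_mul_div_left _ _ hM, Nat.div_eq_of_lt hm, Nat.zero_add]
        have h2 : (m + M * n) % M = m := by
          rw [Nat.add_mul_mod_self_left, Nat.mod_eq_of_lt hm]
        rw [h1, h2] at this
        exact this.resolve_left hxn

end CupMain
section CupM1

variable {X Y : Type*} [AddCommGroup Y] [Module ℝ Y]

lemma interRep2 (N M : ℕ) (A B : ℕ → Set X) :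
    (⋂ n ∈ Finset.range N, A n) ∩ (⋂ m ∈ Finset.range M, B m)
      = ⋂ k ∈ Finset.range (N + M), (if k < N then A k else B (k - N)) := by
  ext x
  simp only [Set.mem_inter_iff, Set.mem_iInter, Finset.mem_range]
  constructor
  · rintro ⟨h1, h2⟩ k hk
    by_cases h : k < N
    · simpa [h] using h1 k h
    · have := h2 (k - N) (by omega)
      simpa [h] using this
  · intro h
    constructor
    · intro n hn
      have := h n (by omega)
      simpa [hn] using this
    · intro m hm
      have := h (N + m) (by omega)
      have hnotlt : ¬ (N + m < N) := by omega
      simpa [hnotlt] using this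

lemma cup_M1 {𝒜 : Set (Set X)} {Φ : Set X → Y}
    (hcl : ∀ A ∈ 𝒜, ∀ B ∈ 𝒜, A ∪ B ∈ 𝒜) (hΦ : CupSemiModular 𝒜 Φ)
    {N M : ℕ} {A B : ℕ → Set X} (hN : 0 < N) (hM : 0 < M)
    (hA : ∀ n ∈ Finset.range N, A n ∈ 𝒜) (hB : ∀ m ∈ Finset.range M, B m ∈ 𝒜) :
    cupExt 𝒜 Φ ((⋂ n ∈ Finset.range N, A n) ∩ (⋂ m ∈ Finset.range M, B m))
      = cupSum Φ N A + cupSum Φ M B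
        - ∑ b ∈ (Finset.range N).powerset.filter (· ≠ ∅),
            ∑ c ∈ (Finset.range M).powerset.filter (· ≠ ∅),
              (nu b * nu c) • Φ ((⋃ n ∈ b, A n) ∪ ⋃ m ∈ c, B m) := by
  classical
  set C : ℕ → Set X := fun k => if k < N then A k else B (k - N) with hC
  have hCmem : ∀ k ∈ Finset.range (N + M), C k ∈ 𝒜 := by
    intro k hk
    rw [Finset.mem_range] at hk
    by_cases h : k < N
    · simpa [hC, h] using hA k (Finset.mem_range.2 h)
    · simpa [hC, h] using hB (k - N) (Finset.mem_range.2 (by omega))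
  rw [cupExt_eq hcl hΦ (by omega : 0 < N + M) hCmem (interRep2 N M A B)]
  -- term rewriting function
  have hterm : ∀ p ∈ (Finset.range N).powerset ×ˢ (Finset.range M).powerset,
      nu (p.1 ∪ p.2.image (· + N)) • Φ (⋃ k ∈ p.1 ∪ p.2.image (· + N), C k)
        = (-(-1 : ℝ) ^ (p.1.card + p.2.card)) •
            Φ ((⋃ n ∈ p.1, A n) ∪ ⋃ m ∈ p.2, B m) := by
    rintro ⟨b, c⟩ hp
    rcases Finset.mem_product.1 hp with ⟨hb, hc⟩
    rw [Finset.mem_powerset] at hb hc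
    have hdisj : Disjoint b (c.image (· + N)) := by
      rw [Finset.disjoint_left]
      intro k hk1 hk2
      have h1 : k < N := Finset.mem_range.1 (hb hk1)
      rcases Finset.mem_image.1 hk2 with ⟨m, _, rfl⟩
      omega
    have hcard : (b ∪ c.image (· + N)).card = b.card + c.card := by
      rw [Finset.card_union_of_disjoint hdisj,
        Finset.card_image_of_injective _ (fun x y h => by omega)]
    have hint : (⋃ k ∈ b ∪ c.image (· + N), C k)
        = (⋃ n ∈ b, A n) ∪ ⋃ m ∈ c, B m := by
      rw [Finset.set_biUnion_union]
      congr 1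
      · exact Set.iUnion₂_congr fun k hk => if_pos (Finset.mem_range.1 (hb hk))
      · rw [Finset.set_biUnion_finset_image]
        refine Set.iUnion₂_congr fun m hm => ?_
        have h : ¬ (m + N < N) := by omega
        rw [hC]
        simp only [if_neg h, Nat.add_sub_cancel]
    rw [hint, nu_eq, hcard]
  -- the bijection between nonempty subsets of range (N+M) and pairs
  have hbij : cupSum Φ (N + M) C
      = ∑ p ∈ ((Finset.range N).powerset ×ˢ (Finset.range M).powerset).erase (∅, ∅),
          (-(-1 : ℝ) ^ (p.1.card + p.2.card)) •
            Φ ((⋃ n ∈ p.1, A n) ∪ ⋃ m ∈ p.2, B m) := by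
    rw [cupSum]
    refine Finset.sum_nbij'
      (fun d => (d.filter (· < N), (d.filter (fun k => ¬ k < N)).image (· - N)))
      (fun p => p.1 ∪ p.2.image (· + N)) ?_ ?_ ?_ ?_ ?_
    · -- maps into erase
      intro d hd
      rcases Finset.mem_filter.1 hd with ⟨hd1, hd2⟩
      rw [Finset.mem_powerset] at hd1
      refine Finset.mem_erase.2 ⟨?_, Finset.mem_product.2 ⟨?_, ?_⟩⟩
      · -- not both empty
        intro hcontra
        obtain ⟨k, hk⟩ := Finset.nonempty_of_ne_empty hd2
        by_cases h : k < N
        · have : k ∈ d.filter (· < N) := Finset.mem_filter.2 ⟨hk, h⟩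
          rw [show (d.filter (· < N)) = (∅ : Finset ℕ) from congrArg Prod.fst hcontra] at this
          simp at this
        · have : k - N ∈ (d.filter (fun k => ¬ k < N)).image (· - N) :=
            Finset.mem_image.2 ⟨k, Finset.mem_filter.2 ⟨hk, h⟩, rfl⟩
          rw [show ((d.filter (fun k => ¬ k < N)).image (· - N)) = (∅ : Finset ℕ)
            from congrArg Prod.snd hcontra] at this
          simp at this
      · exact Finset.mem_powerset.2 (fun k hk =>
          Finset.mem_range.2 (Finset.mem_filter.1 hk).2)
      · refine Finset.mem_powerset.2 (fun m hm => ?_)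
        rcases Finset.mem_image.1 hm with ⟨k, hk, rfl⟩
        rcases Finset.mem_filter.1 hk with ⟨hkd, hkN⟩
        have := Finset.mem_range.1 (hd1 hkd)
        exact Finset.mem_range.2 (by omega)
    · -- inverse maps into filter
      rintro ⟨b, c⟩ hp
      rcases Finset.mem_erase.1 hp with ⟨hne, hp'⟩
      rcases Finset.mem_product.1 hp' with ⟨hb, hc⟩
      rw [Finset.mem_powerset] at hb hc
      refine Finset.mem_filter.2 ⟨Finset.mem_powerset.2 ?_, ?_⟩
      · intro k hk
        rcases Finset.mem_union.1 hk with h | h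
        · exact Finset.mem_range.2 (by have := Finset.mem_range.1 (hb h); omega)
        · rcases Finset.mem_image.1 h with ⟨m, hm, rfl⟩
          exact Finset.mem_range.2 (by have := Finset.mem_range.1 (hc hm); omega)
      · -- nonempty
        intro hcontra
        apply hne
        have h1 : b = ∅ := by
          rcases Finset.eq_empty_or_nonempty b with h | h
          · exact h
          · obtain ⟨k, hk⟩ := h
            exact absurd (hcontra ▸ Finset.mem_union_left _ hk) (Finset.notMem_empty k)
        have h2 : c = ∅ := by
          rcases Finset.eq_empty_or_nonempty c with h | h
          · exact h
          · obtain ⟨m, hm⟩ := h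
            exact absurd (hcontra ▸ Finset.mem_union_right _
              (Finset.mem_image.2 ⟨m, hm, rfl⟩)) (Finset.notMem_empty (m + N))
        rw [h1, h2]
    · -- left inverse
      intro d hd
      rcases Finset.mem_filter.1 hd with ⟨hd1, -⟩
      rw [Finset.mem_powerset] at hd1
      ext k
      simp only [Finset.mem_union, Finset.mem_filter, Finset.mem_image]
      constructor
      · rintro (⟨hk, -⟩ | ⟨j, ⟨i, ⟨hi, hiN⟩, rfl⟩, rfl⟩)
        · exact hk
        · have : i - N + N = i := by omega
          rwa [this]
      · intro hk
        by_cases h : k < N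
        · exact Or.inl ⟨hk, h⟩
        · exact Or.inr ⟨k - N, ⟨k, ⟨hk, h⟩, rfl⟩, by omega⟩
    · -- right inverse
      rintro ⟨b, c⟩ hp
      rcases Finset.mem_erase.1 hp with ⟨-, hp'⟩
      rcases Finset.mem_product.1 hp' with ⟨hb, hc⟩
      rw [Finset.mem_powerset] at hb hc
      have hb' : ∀ k ∈ b, k < N := fun k hk => Finset.mem_range.1 (hb hk)
      have hc' : ∀ m ∈ c, m < M := fun m hm => Finset.mem_range.1 (hc hm)
      refine Prod.ext ?_ ?_
      · ext k
        simp only [Finset.mem_filter, Finset.mem_union, Finset.mem_image]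
        constructor
        · rintro ⟨(hk | ⟨m, hm, rfl⟩), hkN⟩
          · exact hk
          · omega
        · intro hk
          exact ⟨Or.inl hk, hb' k hk⟩
      · ext m
        simp only [Finset.mem_image, Finset.mem_filter, Finset.mem_union]
        constructor
        · rintro ⟨k, ⟨(hk | ⟨j, hj, rfl⟩), hkN⟩, rfl⟩
          · exact absurd (hb' k hk) hkN
          · simpa using hj
        · intro hm
          exact ⟨m + N, ⟨Or.inr ⟨m, hm, rfl⟩, by omega⟩, by omega⟩
    · -- terms agree
      intro d hd
      have hmem : ((fun d => (d.filter (· < N),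
          (d.filter (fun k => ¬ k < N)).image (· - N))) d)
          ∈ (Finset.range N).powerset ×ˢ (Finset.range M).powerset := by
        rcases Finset.mem_filter.1 hd with ⟨hd1, -⟩
        rw [Finset.mem_powerset] at hd1
        refine Finset.mem_product.2 ⟨?_, ?_⟩
        · exact Finset.mem_powerset.2 (fun k hk =>
            Finset.mem_range.2 (Finset.mem_filter.1 hk).2)
        · refine Finset.mem_powerset.2 (fun m hm => ?_)
          rcases Finset.mem_image.1 hm with ⟨k, hk, rfl⟩
          rcases Finset.mem_filter.1 hk with ⟨hkd, hkN⟩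
          have := Finset.mem_range.1 (hd1 hkd)
          exact Finset.mem_range.2 (by omega)
      have := hterm _ hmem
      rw [← this]
      -- now d = union of the two parts
      have hdu : (d.filter (· < N)) ∪ ((d.filter (fun k => ¬ k < N)).image (· - N)).image (· + N) = d := by
        rcases Finset.mem_filter.1 hd with ⟨hd1, -⟩
        rw [Finset.mem_powerset] at hd1
        ext k
        simp only [Finset.mem_union, Finset.mem_filter, Finset.mem_image]
        constructor
        · rintro (⟨hk, -⟩ | ⟨j, ⟨i, ⟨hi, hiN⟩, rfl⟩, rfl⟩)
          · exact hk
          · have : i - N + N = i := by omega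
            rwa [this]
        · intro hk
          by_cases h : k < N
          · exact Or.inl ⟨hk, h⟩
          · exact Or.inr ⟨k - N, ⟨k, ⟨hk, h⟩, rfl⟩, by omega⟩
      simp only
      rw [hdu]
  rw [hbij]
  -- now split the sum over pairs
  have hsplit : ∑ p ∈ ((Finset.range N).powerset ×ˢ (Finset.range M).powerset).erase (∅, ∅),
      (-(-1 : ℝ) ^ (p.1.card + p.2.card)) • Φ ((⋃ n ∈ p.1, A n) ∪ ⋃ m ∈ p.2, B m)
      = cupSum Φ N A + cupSum Φ M B
        - ∑ b ∈ (Finset.range N).powerset.filter (· ≠ ∅),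
            ∑ c ∈ (Finset.range M).powerset.filter (· ≠ ∅),
              (nu b * nu c) • Φ ((⋃ n ∈ b, A n) ∪ ⋃ m ∈ c, B m) := by
    set F : Finset ℕ → Finset ℕ → Y := fun b c =>
      (-(-1 : ℝ) ^ (b.card + c.card)) • Φ ((⋃ n ∈ b, A n) ∪ ⋃ m ∈ c, B m) with hF
    have hmem00 : ((∅, ∅) : Finset ℕ × Finset ℕ)
        ∈ (Finset.range N).powerset ×ˢ (Finset.range M).powerset :=
      Finset.mem_product.2 ⟨Finset.empty_mem_powerset _, Finset.empty_mem_powerset _⟩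
    have e1 : ∑ p ∈ (Finset.range N).powerset ×ˢ (Finset.range M).powerset, F p.1 p.2
        = F ∅ ∅ + ∑ p ∈ ((Finset.range N).powerset ×ˢ (Finset.range M).powerset).erase (∅, ∅),
            F p.1 p.2 := by
      rw [Finset.add_sum_erase _ (fun p => F p.1 p.2) hmem00]
    have e2 : ∑ p ∈ (Finset.range N).powerset ×ˢ (Finset.range M).powerset, F p.1 p.2
        = F ∅ ∅ + ∑ b ∈ (Finset.range N).powerset.filter (· ≠ ∅), F b ∅
          + ∑ c ∈ (Finset.range M).powerset.filter (· ≠ ∅), F ∅ c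
          + ∑ b ∈ (Finset.range N).powerset.filter (· ≠ ∅),
              ∑ c ∈ (Finset.range M).powerset.filter (· ≠ ∅), F b c := by
      rw [Finset.sum_product]
      rw [sum_powerset_split (Finset.range N) (fun b => ∑ c ∈ (Finset.range M).powerset, F b c)]
      rw [sum_powerset_split (Finset.range M) (F ∅)]
      rw [Finset.sum_congr rfl (fun b _ => sum_powerset_split (Finset.range M) (F b))]
      rw [Finset.sum_add_distrib]
      abel
    have hFb : ∀ b ∈ (Finset.range N).powerset.filter (· ≠ ∅), F b ∅ = nu b • Φ (⋃ n ∈ b, A n) := by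
      intro b _
      rw [hF]
      simp only [Finset.card_empty, Nat.add_zero]
      rw [show (⋃ m ∈ (∅ : Finset ℕ), B m) = (∅ : Set X) by simp, Set.union_empty, ← nu_eq]
    have hFc : ∀ c ∈ (Finset.range M).powerset.filter (· ≠ ∅), F ∅ c = nu c • Φ (⋃ m ∈ c, B m) := by
      intro c _
      rw [hF]
      simp only [Finset.card_empty, Nat.zero_add]
      rw [show (⋃ n ∈ (∅ : Finset ℕ), A n) = (∅ : Set X) by simp, Set.empty_union, ← nu_eq]
    have hFm : ∀ b ∈ (Finset.range N).powerset.filter (· ≠ ∅),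
        ∀ c ∈ (Finset.range M).powerset.filter (· ≠ ∅),
        F b c = -((nu b * nu c) • Φ ((⋃ n ∈ b, A n) ∪ ⋃ m ∈ c, B m)) := by
      intro b _ c _
      rw [hF, nu_mul, ← neg_smul]
    calc ∑ p ∈ ((Finset.range N).powerset ×ˢ (Finset.range M).powerset).erase (∅, ∅), F p.1 p.2
        = ∑ b ∈ (Finset.range N).powerset.filter (· ≠ ∅), F b ∅
          + ∑ c ∈ (Finset.range M).powerset.filter (· ≠ ∅), F ∅ c
          + ∑ b ∈ (Finset.range N).powerset.filter (· ≠ ∅),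
              ∑ c ∈ (Finset.range M).powerset.filter (· ≠ ∅), F b c := by
          have := e1.symm.trans e2
          abel_nf at this ⊢
          linear_combination (norm := abel) this
      _ = _ := by
          rw [Finset.sum_congr rfl hFb, Finset.sum_congr rfl hFc,
            Finset.sum_congr rfl (fun b hb => Finset.sum_congr rfl (fun c hc => hFm b hb c hc)),
            cupSum, cupSum]
          simp only [Finset.sum_neg_distrib]
          abel
  exact hsplit

end CupM1
section CupM2

variable {X Y : Type*} [AddCommGroup Y] [Module ℝ Y]

lemma unionRep2 {N M : ℕ} (hM : 0 < M) (A B : ℕ → Set X) :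
    (⋂ n ∈ Finset.range N, A n) ∪ (⋂ m ∈ Finset.range M, B m)
      = ⋂ k ∈ Finset.range (N * M), (A (k / M) ∪ B (k % M)) := by
  ext x
  simp only [Set.mem_union, Set.mem_iInter, Finset.mem_range]
  constructor
  · rintro (h | h) k hk
    · exact Or.inl (h _ ((Nat.div_lt_iff_lt_mul hM).2 (by omega)))
    · exact Or.inr (h _ (Nat.mod_lt _ hM))
  · intro h
    by_cases hx : ∀ n, n < N → x ∈ A n
    · exact Or.inl (fun n hn => hx n hn)
    · push_neg at hx
      obtain ⟨n, hn, hxn⟩ := hx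
      refine Or.inr (fun m hm => ?_)
      have := h (m + M * n) (by
        calc m + M * n < M + M * n := by omega
          _ = M * (n + 1) := by ring
          _ ≤ M * N := Nat.mul_le_mul_left M (by omega)
          _ = N * M := Nat.mul_comm M N)
      have h1 : (m + M * n) / M = n := by
        rw [Nat.add_mul_div_left _ _ hM, Nat.div_eq_of_lt hm, Nat.zero_add]
      have h2 : (m + M * n) % M = m := by
        rw [Nat.add_mul_mod_self_left, Nat.mod_eq_of_lt hm]
      rw [h1, h2] at this
      exact this.resolve_left hxn

lemma biUnionPtwise (p : Finset ℕ) (S T : ℕ → Set X) :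
    (⋃ k ∈ p, (S k ∪ T k)) = (⋃ k ∈ p, S k) ∪ ⋃ k ∈ p, T k := by
  ext x
  simp only [Set.mem_iUnion, Set.mem_union]
  constructor
  · rintro ⟨k, hk, h | h⟩
    · exact Or.inl ⟨k, hk, h⟩
    · exact Or.inr ⟨k, hk, h⟩
  · rintro (⟨k, hk, h⟩ | ⟨k, hk, h⟩)
    · exact ⟨k, hk, Or.inl h⟩
    · exact ⟨k, hk, Or.inr h⟩

lemma cup_M2 {𝒜 : Set (Set X)} {Φ : Set X → Y}
    (hcl : ∀ A ∈ 𝒜, ∀ B ∈ 𝒜, A ∪ B ∈ 𝒜) (hΦ : CupSemiModular 𝒜 Φ)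
    {N M : ℕ} {A B : ℕ → Set X} (hN : 0 < N) (hM : 0 < M)
    (hA : ∀ n ∈ Finset.range N, A n ∈ 𝒜) (hB : ∀ m ∈ Finset.range M, B m ∈ 𝒜) :
    cupExt 𝒜 Φ ((⋂ n ∈ Finset.range N, A n) ∪ (⋂ m ∈ Finset.range M, B m))
      = ∑ b ∈ (Finset.range N).powerset.filter (· ≠ ∅),
          ∑ c ∈ (Finset.range M).powerset.filter (· ≠ ∅),
            (nu b * nu c) • Φ ((⋃ n ∈ b, A n) ∪ ⋃ m ∈ c, B m) := by
  classical
  have hDmem : ∀ k ∈ Finset.range (N * M), A (k / M) ∪ B (k % M) ∈ 𝒜 := by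
    intro k hk
    rw [Finset.mem_range] at hk
    refine hcl _ (hA _ (Finset.mem_range.2 ?_)) _ (hB _ (Finset.mem_range.2 (Nat.mod_lt _ hM)))
    exact (Nat.div_lt_iff_lt_mul hM).2 (by omega)
  rw [cupExt_eq hcl hΦ (Nat.mul_pos hN hM) hDmem (unionRep2 hM A B), cupSum]
  have hmaps : ∀ p ∈ (Finset.range (N * M)).powerset.filter (· ≠ ∅),
      (p.image (· / M), p.image (· % M))
        ∈ ((Finset.range N).powerset.filter (· ≠ ∅)) ×ˢ
          ((Finset.range M).powerset.filter (· ≠ ∅)) := by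
    intro p hp
    rcases Finset.mem_filter.1 hp with ⟨hp1, hp2⟩
    rw [Finset.mem_powerset] at hp1
    have hpne := Finset.nonempty_of_ne_empty hp2
    refine Finset.mem_product.2 ⟨Finset.mem_filter.2 ⟨Finset.mem_powerset.2 ?_, ?_⟩,
      Finset.mem_filter.2 ⟨Finset.mem_powerset.2 ?_, ?_⟩⟩
    · intro n hn
      rcases Finset.mem_image.1 hn with ⟨k, hk, rfl⟩
      have := Finset.mem_range.1 (hp1 hk)
      exact Finset.mem_range.2 ((Nat.div_lt_iff_lt_mul hM).2 (by omega))
    · exact Finset.nonempty_iff_ne_empty.1 (hpne.image _)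
    · intro m hm
      rcases Finset.mem_image.1 hm with ⟨k, hk, rfl⟩
      exact Finset.mem_range.2 (Nat.mod_lt _ hM)
    · exact Finset.nonempty_iff_ne_empty.1 (hpne.image _)
  rw [← Finset.sum_fiberwise_of_maps_to hmaps
    (fun p => nu p • Φ (⋃ k ∈ p, (A (k / M) ∪ B (k % M))))]
  rw [Finset.sum_product]
  refine Finset.sum_congr rfl fun b hb => Finset.sum_congr rfl fun c hc => ?_
  rcases Finset.mem_filter.1 hb with ⟨hb1, hb2⟩
  rcases Finset.mem_filter.1 hc with ⟨hc1, hc2⟩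
  rw [Finset.mem_powerset] at hb1 hc1
  have hconst : ∀ p ∈ ((Finset.range (N * M)).powerset.filter (· ≠ ∅)).filter
      (fun p => (p.image (· / M), p.image (· % M)) = (b, c)),
      nu p • Φ (⋃ k ∈ p, (A (k / M) ∪ B (k % M)))
        = nu p • Φ ((⋃ n ∈ b, A n) ∪ ⋃ m ∈ c, B m) := by
    intro p hp
    rcases Finset.mem_filter.1 hp with ⟨-, hp2⟩
    have h1 : p.image (· / M) = b := congrArg Prod.fst hp2
    have h2 : p.image (· % M) = c := congrArg Prod.snd hp2
    rw [biUnionPtwise]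
    rw [← h1, ← h2, Finset.set_biUnion_finset_image, Finset.set_biUnion_finset_image]
  rw [Finset.sum_congr rfl hconst, ← Finset.sum_smul]
  rw [fiber_nu_sum hM hb1 hc1 hb2 hc2]

end CupM2
section CupAssemble

variable {X Y : Type*} [AddCommGroup Y] [Module ℝ Y]

lemma cup_modular {𝒜 : Set (Set X)} {Φ : Set X → Y}
    (hcl : ∀ A ∈ 𝒜, ∀ B ∈ 𝒜, A ∪ B ∈ 𝒜) (hΦ : CupSemiModular 𝒜 Φ)
    {E F : Set X} (hE : HasRepI 𝒜 E) (hF : HasRepI 𝒜 F) :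
    cupExt 𝒜 Φ (E ∪ F) + cupExt 𝒜 Φ (E ∩ F) = cupExt 𝒜 Φ E + cupExt 𝒜 Φ F := by
  obtain ⟨N, hN, A, hA, hE'⟩ := hE
  obtain ⟨M, hM, B, hB, hF'⟩ := hF
  subst hE' hF'
  rw [cup_M1 hcl hΦ hN hM hA hB, cup_M2 hcl hΦ hN hM hA hB,
    cupExt_eq hcl hΦ hN hA rfl, cupExt_eq hcl hΦ hM hB rfl]
  abel

/-- inclusion–exclusion for a modular function on a lattice of sets (cup form) -/
lemma modular_cupIE {𝒜 : Set (Set X)} {Φ : Set X → Y}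
    (hclI : ∀ A ∈ 𝒜, ∀ B ∈ 𝒜, A ∩ B ∈ 𝒜) (hclU : ∀ A ∈ 𝒜, ∀ B ∈ 𝒜, A ∪ B ∈ 𝒜)
    (hΦ : Modular 𝒜 Φ) :
    ∀ N : ℕ, 0 < N → ∀ A : ℕ → Set X, (∀ n ∈ Finset.range N, A n ∈ 𝒜) →
      Φ (⋂ n ∈ Finset.range N, A n)
        = ∑ b ∈ (Finset.range N).powerset.filter (· ≠ ∅), nu b • Φ (⋃ n ∈ b, A n) := by
  intro N hN
  induction N, hN using Nat.le_induction with
  | base =>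
    intro A hA
    rw [show Finset.range 1 = {0} from rfl,
      show (({0} : Finset ℕ).powerset.filter (· ≠ ∅)) = {{0}} from rfl]
    simp [nu]
  | succ N hN IH =>
    intro A hA
    have hA' : ∀ n ∈ Finset.range N, A n ∈ 𝒜 :=
      fun n hn => hA n (Finset.mem_range.2 (by have := Finset.mem_range.1 hn; omega))
    have hAN : A N ∈ 𝒜 := hA N (Finset.mem_range.2 (by omega))
    have hU : (⋂ n ∈ Finset.range N, A n) ∈ 𝒜 :=
      finset_biInter_mem hclI A (Finset.range N)
        (Finset.nonempty_range_iff.2 (by omega)) hA'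
    have hsplit : (⋂ n ∈ Finset.range (N + 1), A n)
        = (⋂ n ∈ Finset.range N, A n) ∩ A N := by
      rw [Finset.range_add_one, Finset.set_biInter_insert, Set.inter_comm]
    have hmod := hΦ _ hU _ hAN
    have hUcap : (⋂ n ∈ Finset.range N, A n) ∪ A N
        = ⋂ n ∈ Finset.range N, (A n ∪ A N) := by
      rw [Set.union_comm, ← union_biInter' (A N) (Finset.range N) A]
      exact Set.iInter₂_congr fun n _ => Set.union_comm _ _
    have hΦU : Φ ((⋂ n ∈ Finset.range N, A n) ∩ A N)
        = Φ (⋂ n ∈ Finset.range N, A n) + Φ (A N)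
          - Φ ((⋂ n ∈ Finset.range N, A n) ∪ A N) := by
      rw [eq_sub_iff_add_eq, add_comm, hmod]
    rw [hsplit, hΦU, IH A hA', hUcap,
      IH (fun n => A n ∪ A N) (fun n hn => hclU _ (hA' n hn) _ hAN)]
    have hps : (Finset.range (N + 1)).powerset.filter (· ≠ ∅)
        = ((Finset.range N).powerset.filter (· ≠ ∅))
          ∪ (Finset.range N).powerset.image (insert N) := by
      rw [Finset.range_add_one, Finset.powerset_insert, Finset.filter_union]
      congr 1
      refine Finset.filter_true_of_mem ?_
      intro b hb
      rcases Finset.mem_image.1 hb with ⟨a, -, rfl⟩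
      exact fun h => by simpa [h] using Finset.mem_insert_self N a
    have hdisj : Disjoint ((Finset.range N).powerset.filter (· ≠ ∅))
        ((Finset.range N).powerset.image (insert N)) := by
      rw [Finset.disjoint_left]
      intro b hb1 hb2
      rcases Finset.mem_filter.1 hb1 with ⟨hb1', -⟩
      rw [Finset.mem_powerset] at hb1'
      rcases Finset.mem_image.1 hb2 with ⟨a, -, rfl⟩
      have : N ∈ Finset.range N := hb1' (Finset.mem_insert_self N a)
      simp at this
    rw [hps, Finset.sum_union hdisj]
    have hinj : ∀ a ∈ (Finset.range N).powerset, ∀ a' ∈ (Finset.range N).powerset,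
        insert N a = insert N a' → a = a' := by
      intro a ha a' ha' he
      rw [Finset.mem_powerset] at ha ha'
      have hNa : N ∉ a := fun h => by have := Finset.mem_range.1 (ha h); omega
      have hNa' : N ∉ a' := fun h => by have := Finset.mem_range.1 (ha' h); omega
      rw [← Finset.erase_insert hNa, ← Finset.erase_insert hNa', he]
    rw [Finset.sum_image hinj]
    rw [sum_powerset_split (Finset.range N)
      (fun b => nu (insert N b) • Φ (⋃ n ∈ insert N b, A n))]
    have hempty : nu (insert N (∅ : Finset ℕ)) • Φ (⋃ n ∈ insert N (∅ : Finset ℕ), A n)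
        = Φ (A N) := by
      rw [Finset.set_biUnion_insert]
      have h1 : nu (insert N (∅ : Finset ℕ)) = 1 := by
        rw [nu]
        norm_num
      rw [h1]
      simp
    have hterm : ∀ b ∈ (Finset.range N).powerset.filter (· ≠ ∅),
        nu (insert N b) • Φ (⋃ n ∈ insert N b, A n)
          = -(nu b • Φ (⋃ n ∈ b, (A n ∪ A N))) := by
      intro b hb
      rcases Finset.mem_filter.1 hb with ⟨hb1, hb2⟩
      rw [Finset.mem_powerset] at hb1
      have hNb : N ∉ b := fun h => by have := Finset.mem_range.1 (hb1 h); omega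
      have hbint : (⋃ n ∈ b, (A n ∪ A N)) = A N ∪ ⋃ n ∈ b, A n := by
        rw [Set.iUnion₂_congr (fun n (hn : n ∈ b) => Set.union_comm (A n) (A N)),
          biUnion_union_biUnion (Finset.nonempty_of_ne_empty hb2)]
      rw [hbint, nu_insert hNb, Finset.set_biUnion_insert, neg_smul]
    rw [Finset.sum_congr rfl hterm, Finset.sum_neg_distrib, hempty]
    abel

end CupAssemble
section Final

variable {X Y : Type*} [AddCommGroup Y] [Module ℝ Y]

lemma repU_lattice {𝒜₀ : Set (Set X)} (hne : 𝒜₀.Nonempty)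
    (hcl : ∀ A ∈ 𝒜₀, ∀ B ∈ 𝒜₀, A ∩ B ∈ 𝒜₀) :
    IsSetLattice {E : Set X | HasRepU 𝒜₀ E} := by
  refine ⟨?_, ?_, ?_⟩
  · obtain ⟨A, hA⟩ := hne
    exact ⟨A, hasRepU_mem hA⟩
  · intro A hA B hB
    exact hasRepU_inter hcl hA hB
  · intro A hA B hB
    exact hasRepU_union hA hB

lemma repI_lattice {𝒜₀ : Set (Set X)} (hne : 𝒜₀.Nonempty)
    (hcl : ∀ A ∈ 𝒜₀, ∀ B ∈ 𝒜₀, A ∪ B ∈ 𝒜₀) :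
    IsSetLattice {E : Set X | HasRepI 𝒜₀ E} := by
  refine ⟨?_, ?_, ?_⟩
  · obtain ⟨A, hA⟩ := hne
    exact ⟨A, hasRepI_mem hA⟩
  · intro A hA B hB
    exact hasRepI_inter hA hB
  · intro A hA B hB
    exact hasRepI_union hcl hA hB

end Final

/-- A set function on a semilattice is semi-modular iff it extends to a
modular set function on the generated lattice; such an extension is unique. -/
theorem stmt6 {X Y : Type*} [AddCommGroup Y] [Module ℝ Y]
    (𝒜₀ 𝒜₁ : Set (Set X))
    (hsl : IsCapSemilattice 𝒜₀ ∨ IsCupSemilattice 𝒜₀)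
    (h₁ : IsSetLattice 𝒜₁ ∧ 𝒜₀ ⊆ 𝒜₁ ∧
      ∀ L : Set (Set X), IsSetLattice L → 𝒜₀ ⊆ L → 𝒜₁ ⊆ L)
    (Φ₀ : Set X → Y) :
    (SemiModular 𝒜₀ Φ₀ ↔
      ∃ Φ₁ : Set X → Y, Modular 𝒜₁ Φ₁ ∧ ∀ A ∈ 𝒜₀, Φ₁ A = Φ₀ A) ∧
    (∀ Φ₁ Ψ₁ : Set X → Y, Modular 𝒜₁ Φ₁ → (∀ A ∈ 𝒜₀, Φ₁ A = Φ₀ A) →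
      Modular 𝒜₁ Ψ₁ → (∀ A ∈ 𝒜₀, Ψ₁ A = Φ₀ A) → ∀ A ∈ 𝒜₁, Φ₁ A = Ψ₁ A) := by
  obtain ⟨⟨h₁ne, h₁I, h₁U⟩, hsub, hmin⟩ := h₁
  constructor
  · constructor
    · -- semi-modular implies existence of modular extension
      intro hsm
      rcases hsl with hcap | hcup
      · obtain ⟨hne, hcl⟩ := hcap
        have hΦ : CapSemiModular 𝒜₀ Φ₀ := hsm.1 ⟨hne, hcl⟩
        have hrepset : 𝒜₁ ⊆ {E : Set X | HasRepU 𝒜₀ E} :=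
          hmin _ (repU_lattice hne hcl) (fun A hA => hasRepU_mem hA)
        exact ⟨capExt 𝒜₀ Φ₀,
          fun A hA B hB => cap_modular hcl hΦ (hrepset hA) (hrepset hB),
          fun A hA => capExt_extends hcl hΦ hA⟩
      · obtain ⟨hne, hcl⟩ := hcup
        have hΦ : CupSemiModular 𝒜₀ Φ₀ := hsm.2 ⟨hne, hcl⟩
        have hrepset : 𝒜₁ ⊆ {E : Set X | HasRepI 𝒜₀ E} :=
          hmin _ (repI_lattice hne hcl) (fun A hA => hasRepI_mem hA)
        exact ⟨cupExt 𝒜₀ Φ₀,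
          fun A hA B hB => cup_modular hcl hΦ (hrepset hA) (hrepset hB),
          fun A hA => cupExt_extends hcl hΦ hA⟩
    · -- modular extension implies semi-modularity
      rintro ⟨Φ₁, hmod, hext⟩
      constructor
      · rintro ⟨-, hcl⟩
        intro N hN A hA hU
        have IE := modular_capIE h₁I h₁U hmod N hN A (fun n hn => hsub (hA n hn))
        rw [← hext _ hU, IE]
        refine Finset.sum_congr rfl fun b hb => ?_
        rcases Finset.mem_filter.1 hb with ⟨hb1, hb2⟩
        rw [Finset.mem_powerset] at hb1
        rw [hext _ (finset_biInter_mem hcl A b (Finset.nonempty_of_ne_empty hb2)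
          (fun n hn => hA n (hb1 hn)))]
      · rintro ⟨-, hcl⟩
        intro N hN A hA hU
        have IE := modular_cupIE h₁I h₁U hmod N hN A (fun n hn => hsub (hA n hn))
        rw [← hext _ hU, IE]
        refine Finset.sum_congr rfl fun b hb => ?_
        rcases Finset.mem_filter.1 hb with ⟨hb1, hb2⟩
        rw [Finset.mem_powerset] at hb1
        rw [hext _ (finset_biUnion_mem hcl A b (Finset.nonempty_of_ne_empty hb2)
          (fun n hn => hA n (hb1 hn)))]
  · -- uniqueness
    intro Φ₁ Ψ₁ h1 h1e h2 h2e A hA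
    rcases hsl with hcap | hcup
    · obtain ⟨hne, hcl⟩ := hcap
      have hrepset : 𝒜₁ ⊆ {E : Set X | HasRepU 𝒜₀ E} :=
        hmin _ (repU_lattice hne hcl) (fun A hA => hasRepU_mem hA)
      obtain ⟨N, hN, B, hB, rfl⟩ := hrepset hA
      rw [modular_capIE h₁I h₁U h1 N hN B (fun n hn => hsub (hB n hn)),
        modular_capIE h₁I h₁U h2 N hN B (fun n hn => hsub (hB n hn))]
      refine Finset.sum_congr rfl fun b hb => ?_
      rcases Finset.mem_filter.1 hb with ⟨hb1, hb2⟩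
      rw [Finset.mem_powerset] at hb1
      have hmem : (⋂ n ∈ b, B n) ∈ 𝒜₀ :=
        finset_biInter_mem hcl B b (Finset.nonempty_of_ne_empty hb2)
          (fun n hn => hB n (hb1 hn))
      rw [h1e _ hmem, h2e _ hmem]
    · obtain ⟨hne, hcl⟩ := hcup
      have hrepset : 𝒜₁ ⊆ {E : Set X | HasRepI 𝒜₀ E} :=
        hmin _ (repI_lattice hne hcl) (fun A hA => hasRepI_mem hA)
      obtain ⟨N, hN, B, hB, rfl⟩ := hrepset hA
      rw [modular_cupIE h₁I h₁U h1 N hN B (fun n hn => hsub (hB n hn)),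
        modular_cupIE h₁I h₁U h2 N hN B (fun n hn => hsub (hB n hn))]
      refine Finset.sum_congr rfl fun b hb => ?_
      rcases Finset.mem_filter.1 hb with ⟨hb1, hb2⟩
      rw [Finset.mem_powerset] at hb1
      have hmem : (⋃ n ∈ b, B n) ∈ 𝒜₀ :=
        finset_biUnion_mem hcl B b (Finset.nonempty_of_ne_empty hb2)
          (fun n hn => hB n (hb1 hn))
      rw [h1e _ hmem, h2e _ hmem]
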